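/- arXiv:1401.4178 — 3 statements merged into one kernel-verified Lean document; each statement's English description precedes it below -/
import Mathlib

section
/- Let Γ be a bipartite graph with vertex classes U and V, both of size m, where 0 < 1/m ≪ ε ≪ ρ ≪ 1, 0 ≤ μ ≤ 1/4, and m, μm, ρm are integers. Suppose (1−μ−ε)m ≤ δ(Γ) ≤ Δ(Γ) ≤ (1−μ+ε)m. Then Γ contains a spanning (1−μ−ρ)m-regular subgraph. In particular, Γ contains at least (1−μ−ρ)m pairwise edge-disjoint perfect matchings. -/
/-!
Write `e(S, T')` for the number of edges from `S ⊆ U` to `T' ⊆ W`. A bipartite graph `G ⊆ U × W`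
with `|U| = |W|` and all degrees at least `r` has a spanning `r`-regular subgraph as soon as
`r |S| ≤ e(S, W \ T) + r |T|` for all `S ⊆ U`, `T ⊆ W`. This is Hall's theorem applied to Tutte's
gadget: on one side the edges of `G` together with `deg w - r` slots at each `w ∈ W`, on the other
the edges together with `deg u - r` slots at each `u ∈ U`; an edge may be matched to itself or to
a slot of its `U`-endpoint, a slot at `w` to an edge at `w`. Once the first side is saturated, every
`u` loses at most `deg u - r` edges not matched to themselves and every `w` at least `deg w - r`,
and double counting turns these bounds into equalities.

For a near-regular graph the cut condition reduces to three edge counts, one at `S` against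
`|S||T|`, one at `S` against the degrees in `T`, one at `W \ T` against `|U \ S||W \ T|`;
`ρ ≤ 1/4` and `ε ≤ ρ/3` suffice, for every `m`. A `k`-regular graph satisfies the cut condition
with `r = 1`, so perfect matchings can be peeled off the `d`-regular subgraph one at a time.
-/

open Finset

/-- The degree of a vertex in a (bipartite) edge set, edges given as ordered pairs. -/
def bdeg {V : Type*} [DecidableEq V] (G : Finset (V × V)) (v : V) : ℕ :=
  (G.filter fun e => e.1 = v ∨ e.2 = v).card

/-- `M` is a perfect matching of the bipartite graph with classes `U`, `W`. -/
def IsPerfectMatching {V : Type*} [DecidableEq V] (U W : Finset V) (M : Finset (V × V)) : Prop :=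
  (∀ e ∈ M, e.1 ∈ U ∧ e.2 ∈ W) ∧ (∀ v ∈ U ∪ W, bdeg M v = 1)

variable {α β : Type*}

section Degrees

variable (G : Finset (α × β))

def degFst [DecidableEq α] (a : α) : ℕ := #{e ∈ G | e.1 = a}

def degSnd [DecidableEq β] (b : β) : ℕ := #{e ∈ G | e.2 = b}

theorem sum_degFst [DecidableEq α] (S : Finset α) :
    ∑ a ∈ S, degFst G a = #{e ∈ G | e.1 ∈ S} := by
  rw [card_eq_sum_card_fiberwise (f := Prod.fst) (s := {e ∈ G | e.1 ∈ S}) (t := S)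
    fun e he => (mem_filter.1 he).2]
  refine sum_congr rfl fun a ha => congrArg card ?_
  ext e
  simp only [mem_filter]
  constructor
  · rintro ⟨he, rfl⟩
    exact ⟨⟨he, ha⟩, rfl⟩
  · exact fun h => ⟨h.1.1, h.2⟩

theorem sum_degSnd [DecidableEq β] (T : Finset β) :
    ∑ b ∈ T, degSnd G b = #{e ∈ G | e.2 ∈ T} := by
  rw [card_eq_sum_card_fiberwise (f := Prod.snd) (s := {e ∈ G | e.2 ∈ T}) (t := T)
    fun e he => (mem_filter.1 he).2]
  refine sum_congr rfl fun b hb => congrArg card ?_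
  ext e
  simp only [mem_filter]
  constructor
  · rintro ⟨he, rfl⟩
    exact ⟨⟨he, hb⟩, rfl⟩
  · exact fun h => ⟨h.1.1, h.2⟩

theorem sum_degFst_eq_add [DecidableEq α] [DecidableEq β] (S : Finset α) (T : Finset β) :
    ∑ a ∈ S, degFst G a = #{e ∈ G | e.1 ∈ S ∧ e.2 ∈ T} + #{e ∈ G | e.1 ∈ S ∧ e.2 ∉ T} := by
  rw [sum_degFst, ← card_filter_add_card_filter_not (fun e : α × β => e.2 ∈ T), filter_filter,
    filter_filter]

theorem sum_degSnd_eq_add [DecidableEq α] [DecidableEq β] (S : Finset α) (T : Finset β) :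
    ∑ b ∈ T, degSnd G b = #{e ∈ G | e.1 ∈ S ∧ e.2 ∈ T} + #{e ∈ G | e.1 ∉ S ∧ e.2 ∈ T} := by
  rw [sum_degSnd, ← card_filter_add_card_filter_not (fun e : α × β => e.1 ∈ S), filter_filter,
    filter_filter]
  simp only [and_comm]

theorem card_filter_mem_mem_le_sum_degSnd [DecidableEq α] [DecidableEq β] (S : Finset α)
    (T : Finset β) :
    #{e ∈ G | e.1 ∈ S ∧ e.2 ∈ T} ≤ ∑ b ∈ T, degSnd G b := by
  rw [sum_degSnd]
  exact card_le_card (monotone_filter_right _ fun _ _ h => h.2)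

theorem card_filter_mem_mem_le_mul [DecidableEq α] [DecidableEq β] (S : Finset α) (T : Finset β) :
    #{e ∈ G | e.1 ∈ S ∧ e.2 ∈ T} ≤ #S * #T := by
  rw [← card_product]
  exact card_le_card fun e he => mem_product.2 (mem_filter.1 he).2

theorem degFst_filter_add [DecidableEq α] (p : α × β → Prop) [DecidablePred p] (a : α) :
    degFst {e ∈ G | p e} a + #{e ∈ G | e.1 = a ∧ ¬p e} = degFst G a := by
  rw [degFst, degFst, filter_filter, ← card_filter_add_card_filter_not (s := {e ∈ G | e.1 = a}) p,
    filter_filter, filter_filter]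
  simp only [and_comm]

theorem degSnd_filter_add [DecidableEq β] (p : α × β → Prop) [DecidablePred p] (b : β) :
    degSnd {e ∈ G | p e} b + #{e ∈ G | e.2 = b ∧ ¬p e} = degSnd G b := by
  rw [degSnd, degSnd, filter_filter, ← card_filter_add_card_filter_not (s := {e ∈ G | e.2 = b}) p,
    filter_filter, filter_filter]
  simp only [and_comm]

theorem degFst_sdiff_add [DecidableEq α] [DecidableEq β] {M : Finset (α × β)} (hM : M ⊆ G)
    (a : α) : degFst (G \ M) a + degFst M a = degFst G a := by
  rw [degFst, degFst, degFst, ← card_union_of_disjoint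
    (disjoint_filter_filter sdiff_disjoint), ← filter_union, sdiff_union_of_subset hM]

theorem degSnd_sdiff_add [DecidableEq α] [DecidableEq β] {M : Finset (α × β)} (hM : M ⊆ G)
    (b : β) : degSnd (G \ M) b + degSnd M b = degSnd G b := by
  rw [degSnd, degSnd, degSnd, ← card_union_of_disjoint
    (disjoint_filter_filter sdiff_disjoint), ← filter_union, sdiff_union_of_subset hM]

end Degrees

section Regular

variable {G : Finset (α × β)} {U : Finset α} {W : Finset β}

def IsRegularOn [DecidableEq α] [DecidableEq β] (G : Finset (α × β)) (U : Finset α)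
    (W : Finset β) (r : ℕ) : Prop :=
  (∀ u ∈ U, degFst G u = r) ∧ ∀ w ∈ W, degSnd G w = r

theorem sum_degFst_of_subset_product [DecidableEq α] (hG : G ⊆ U ×ˢ W) :
    ∑ u ∈ U, degFst G u = #G := by
  rw [sum_degFst, filter_true_of_mem fun e he => (mem_product.1 (hG he)).1]

theorem sum_degSnd_of_subset_product [DecidableEq β] (hG : G ⊆ U ×ˢ W) :
    ∑ w ∈ W, degSnd G w = #G := by
  rw [sum_degSnd, filter_true_of_mem fun e he => (mem_product.1 (hG he)).2]

theorem isRegularOn_of_le_degFst_of_degSnd_le [DecidableEq α] [DecidableEq β] {r : ℕ}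
    (hG : G ⊆ U ×ˢ W) (hUW : #U = #W)
    (hU : ∀ u ∈ U, r ≤ degFst G u) (hW : ∀ w ∈ W, degSnd G w ≤ r) : IsRegularOn G U W r := by
  have hsum : ∑ w ∈ W, degSnd G w = ∑ u ∈ U, degFst G u := by
    rw [sum_degFst_of_subset_product hG, sum_degSnd_of_subset_product hG]
  have hconst : ∑ _w ∈ W, r = ∑ _u ∈ U, r := by simp [hUW]
  have hU' : ∑ u ∈ U, degFst G u ≤ ∑ _u ∈ U, r := hsum ▸ hconst ▸ sum_le_sum hW
  have hW' : ∑ _w ∈ W, r ≤ ∑ w ∈ W, degSnd G w := hsum ▸ hconst ▸ sum_le_sum hU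
  exact ⟨fun u hu => ((sum_eq_sum_iff_of_le hU).1 (le_antisymm (sum_le_sum hU) hU') u hu).symm,
    (sum_eq_sum_iff_of_le hW).1 (le_antisymm (sum_le_sum hW) hW')⟩

end Regular

section Bdeg

variable {V : Type*} [DecidableEq V] {G : Finset (V × V)} {U W : Finset V}

theorem bdeg_eq_degFst (hUW : Disjoint U W) (hG : G ⊆ U ×ˢ W) {u : V} (hu : u ∈ U) :
    bdeg G u = degFst G u := by
  refine congrArg card (filter_congr fun e he => or_iff_left fun h => ?_)
  exact disjoint_left.1 hUW hu (h ▸ (mem_product.1 (hG he)).2)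

theorem bdeg_eq_degSnd (hUW : Disjoint U W) (hG : G ⊆ U ×ˢ W) {w : V} (hw : w ∈ W) :
    bdeg G w = degSnd G w := by
  refine congrArg card (filter_congr fun e he => or_iff_right fun h => ?_)
  exact disjoint_left.1 hUW (h ▸ (mem_product.1 (hG he)).1) hw

theorem IsRegularOn.bdeg_eq {r : ℕ} (hUW : Disjoint U W) (hG : G ⊆ U ×ˢ W)
    (h : IsRegularOn G U W r) : ∀ v ∈ U ∪ W, bdeg G v = r := by
  intro v hv
  rcases mem_union.1 hv with hu | hw
  · rw [bdeg_eq_degFst hUW hG hu, h.1 v hu]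
  · rw [bdeg_eq_degSnd hUW hG hw, h.2 v hw]

theorem IsRegularOn.isPerfectMatching (hUW : Disjoint U W) (hG : G ⊆ U ×ˢ W)
    (h : IsRegularOn G U W 1) : IsPerfectMatching U W G :=
  ⟨fun _ he => mem_product.1 (hG he), h.bdeg_eq hUW hG⟩

end Bdeg

-- Matching `s` into its own type lets the identity extend the matching off `s`.
theorem Finset.exists_injOn_of_forall_card_le_card_biUnion {γ : Type*} [DecidableEq γ]
    (s : Finset γ) (t : γ → Finset γ) (h : ∀ B ⊆ s, #B ≤ #(B.biUnion t)) :
    ∃ f : γ → γ, Set.InjOn f s ∧ ∀ x ∈ s, f x ∈ t x := by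
  obtain ⟨g, hg, hgt⟩ := (all_card_le_biUnion_card_iff_exists_injective fun x : s => t x).1
    fun A => by
      have := h (A.map (Function.Embedding.subtype _)) fun x hx => by
        obtain ⟨y, -, rfl⟩ := mem_map.1 hx
        exact y.2
      rwa [card_map, map_eq_image, image_biUnion] at this
  refine ⟨fun x => if hx : x ∈ s then g ⟨x, hx⟩ else x, fun x hx y hy hxy => ?_, fun x hx => ?_⟩
  · rw [mem_coe] at hx hy
    have : g ⟨x, hx⟩ = g ⟨y, hy⟩ := by simpa only [dif_pos hx, dif_pos hy] using hxy
    exact congrArg Subtype.val (hg this)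
  · simpa [dif_pos hx] using hgt ⟨x, hx⟩

inductive Gadget (α β : Type*)
  | edge (e : α × β)
  | slotFst (a : α) (i : ℕ)
  | slotSnd (b : β) (j : ℕ)

noncomputable section

namespace Gadget

instance : DecidableEq (Gadget α β) := Classical.decEq _

section

variable (G : Finset (α × β)) (r : ℕ)

def slotsFst [DecidableEq α] (S : Finset α) : Finset (Gadget α β) :=
  (S.sigma fun a => range (degFst G a - r)).image fun p => slotFst p.1 p.2

def slotsSnd [DecidableEq β] (T : Finset β) : Finset (Gadget α β) :=
  (T.sigma fun b => range (degSnd G b - r)).image fun p => slotSnd p.1 p.2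

def nbhd [DecidableEq α] [DecidableEq β] : Gadget α β → Finset (Gadget α β)
  | edge e => insert (edge e) (slotsFst G r {e.1})
  | slotFst _ _ => ∅
  | slotSnd b _ => {e ∈ G | e.2 = b}.image edge

def left [DecidableEq β] (W : Finset β) : Finset (Gadget α β) :=
  G.image edge ∪ slotsSnd G r W

def fixedEdges (f : Gadget α β → Gadget α β) : Finset (α × β) :=
  {e ∈ G | f (edge e) = edge e}

variable {G r}

@[simp]
theorem slotFst_mem_slotsFst [DecidableEq α] {S : Finset α} {a : α} {i : ℕ} :
    slotFst a i ∈ slotsFst G r S ↔ a ∈ S ∧ i < degFst G a - r := by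
  simp [slotsFst]

@[simp]
theorem edge_mem_left [DecidableEq β] {W : Finset β} {e : α × β} :
    edge e ∈ left G r W ↔ e ∈ G := by
  simp [left, slotsSnd]

@[simp]
theorem slotSnd_mem_left [DecidableEq β] {W : Finset β} {b : β} {j : ℕ} :
    slotSnd b j ∈ left G r W ↔ b ∈ W ∧ j < degSnd G b - r := by
  simp [left, slotsSnd]

@[simp]
theorem slotFst_notMem_left [DecidableEq β] {W : Finset β} {a : α} {i : ℕ} :
    slotFst a i ∉ left G r W := by
  simp [left, slotsSnd]

theorem card_slotsFst [DecidableEq α] (S : Finset α) :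
    #(slotsFst G r S) = ∑ a ∈ S, (degFst G a - r) := by
  rw [slotsFst, card_image_of_injective _ fun p q h => by cases p; cases q; cases h; rfl,
    card_sigma]
  simp

theorem card_slotsSnd [DecidableEq β] (T : Finset β) :
    #(slotsSnd G r T) = ∑ b ∈ T, (degSnd G b - r) := by
  rw [slotsSnd, card_image_of_injective _ fun p q h => by cases p; cases q; cases h; rfl,
    card_sigma]
  simp

end

variable [DecidableEq α] [DecidableEq β] {G : Finset (α × β)} {U : Finset α} {W : Finset β}
  {r : ℕ}

theorem card_add_sum_le_of_cut (hG : G ⊆ U ×ˢ W) (hW : ∀ w ∈ W, r ≤ degSnd G w)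
    (hcut : ∀ S ⊆ U, ∀ T ⊆ W, r * #S ≤ #{e ∈ G | e.1 ∈ S ∧ e.2 ∉ T} + r * #T)
    {E : Finset (α × β)} (hE : E ⊆ G) {T : Finset β} (hT : T ⊆ W) :
    #E + ∑ w ∈ T, (degSnd G w - r) ≤
      #({e ∈ G | e.2 ∈ T} ∪ E) + ∑ u ∈ E.image Prod.fst, (degFst G u - r) := by
  set S := E.image Prod.fst
  have hS : S ⊆ U := fun u hu => by
    obtain ⟨e, he, rfl⟩ := mem_image.1 hu
    exact (mem_product.1 (hG (hE he))).1
  have h_inter : #({e ∈ G | e.2 ∈ T} ∩ E) ≤ #{e ∈ G | e.1 ∈ S ∧ e.2 ∈ T} := by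
    refine card_le_card fun e he => ?_
    obtain ⟨he₁, he₂⟩ := mem_inter.1 he
    exact mem_filter.2 ⟨(mem_filter.1 he₁).1, mem_image_of_mem _ he₂, (mem_filter.1 he₁).2⟩
  have h_union := card_union_add_card_inter {e ∈ G | e.2 ∈ T} E
  have h_T : ∑ w ∈ T, (degSnd G w - r) + r * #T = #{e ∈ G | e.2 ∈ T} := by
    rw [← sum_degSnd, mul_comm, ← smul_eq_mul, ← sum_const, ← sum_add_distrib]
    exact sum_congr rfl fun w hw => Nat.sub_add_cancel (hW w (hT hw))
  have h_S : ∑ u ∈ S, degFst G u ≤ ∑ u ∈ S, (degFst G u - r) + r * #S := by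
    rw [mul_comm, ← smul_eq_mul, ← sum_const, ← sum_add_distrib]
    exact sum_le_sum fun _ _ => le_tsub_add
  have h_split := sum_degFst_eq_add G S T
  have := hcut S hS T hT
  omega

theorem card_le_card_biUnion_nbhd (hG : G ⊆ U ×ˢ W) (hW : ∀ w ∈ W, r ≤ degSnd G w)
    (hcut : ∀ S ⊆ U, ∀ T ⊆ W, r * #S ≤ #{e ∈ G | e.1 ∈ S ∧ e.2 ∉ T} + r * #T)
    {B : Finset (Gadget α β)} (hB : B ⊆ left G r W) : #B ≤ #(B.biUnion (nbhd G r)) := by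
  classical
  set E := {e ∈ G | edge e ∈ B}
  set T := {w ∈ W | ∃ j, slotSnd w j ∈ B}
  have hB_sub : B ⊆ E.image edge ∪ slotsSnd G r T := by
    intro x hx
    have hxl := hB hx
    cases x with
    | edge e => simp_all [E]
    | slotFst a i => simp at hxl
    | slotSnd b j =>
      simp only [slotSnd_mem_left] at hxl
      simp [slotsSnd, T, hxl.1, hxl.2, show ∃ j, slotSnd b j ∈ B from ⟨j, hx⟩]
  have hN_sup : ({e ∈ G | e.2 ∈ T} ∪ E).image edge ∪ slotsFst G r (E.image Prod.fst) ⊆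
      B.biUnion (nbhd G r) := by
    intro x hx
    rcases mem_union.1 hx with hx | hx
    · obtain ⟨e, he, rfl⟩ := mem_image.1 hx
      rcases mem_union.1 he with he | he
      · obtain ⟨heG, -, j, hj⟩ : e ∈ G ∧ e.2 ∈ W ∧ ∃ j, slotSnd e.2 j ∈ B := by
          simpa [T, and_assoc] using he
        exact mem_biUnion.2 ⟨slotSnd e.2 j, hj, by simp [nbhd, heG]⟩
      · exact mem_biUnion.2 ⟨edge e, (mem_filter.1 he).2, by simp [nbhd]⟩
    · obtain ⟨⟨a, i⟩, hai, rfl⟩ := mem_image.1 hx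
      obtain ⟨ha, hi⟩ : a ∈ E.image Prod.fst ∧ i < degFst G a - r := by simpa using hai
      obtain ⟨e, he, rfl⟩ := mem_image.1 ha
      exact mem_biUnion.2 ⟨edge e, (mem_filter.1 he).2, by simp [nbhd, hi]⟩
  have hN_disj : Disjoint (({e ∈ G | e.2 ∈ T} ∪ E).image edge)
      (slotsFst G r (E.image Prod.fst)) := by
    rw [disjoint_left]
    rintro _ hx hy
    obtain ⟨e, -, rfl⟩ := mem_image.1 hx
    simp [slotsFst] at hy
  calc #B ≤ #(E.image edge) + #(slotsSnd G r T) := (card_le_card hB_sub).trans (card_union_le _ _)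
    _ ≤ #E + ∑ w ∈ T, (degSnd G w - r) := by rw [card_slotsSnd]; gcongr; exact card_image_le
    _ ≤ #({e ∈ G | e.2 ∈ T} ∪ E) + ∑ u ∈ E.image Prod.fst, (degFst G u - r) :=
      card_add_sum_le_of_cut hG hW hcut (filter_subset _ G) (filter_subset _ W)
    _ = #(({e ∈ G | e.2 ∈ T} ∪ E).image edge ∪ slotsFst G r (E.image Prod.fst)) := by
      rw [card_union_of_disjoint hN_disj, card_image_of_injective _ fun _ _ => edge.inj,
        card_slotsFst]
    _ ≤ #(B.biUnion (nbhd G r)) := card_le_card hN_sup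

variable {f : Gadget α β → Gadget α β}

theorem le_degFst_fixedEdges (hf : Set.InjOn f (left G r W))
    (hfN : ∀ x ∈ left G r W, f x ∈ nbhd G r x) {u : α} (hu : r ≤ degFst G u) :
    r ≤ degFst (fixedEdges G f) u := by
  have h_split : degFst (fixedEdges G f) u + #{e ∈ G | e.1 = u ∧ f (edge e) ≠ edge e} =
      degFst G u := degFst_filter_add G _ u
  have h_moved : #{e ∈ G | e.1 = u ∧ f (edge e) ≠ edge e} ≤ degFst G u - r := by
    have h_slots : #(slotsFst G r {u}) = degFst G u - r := by simp [card_slotsFst]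
    rw [← h_slots]
    refine card_le_card_of_injOn (fun e => f (edge e)) (fun e he => ?_) fun e₁ he₁ e₂ he₂ h => ?_
    · obtain ⟨heG, rfl, hne⟩ := mem_filter.1 he
      have := hfN (edge e) (by simpa using heG)
      simp only [nbhd, mem_insert, hne, false_or] at this
      exact this
    · exact edge.inj (hf (by simpa using (mem_filter.1 he₁).1)
        (by simpa using (mem_filter.1 he₂).1) h)
  omega

theorem degSnd_fixedEdges_le (hf : Set.InjOn f (left G r W))
    (hfN : ∀ x ∈ left G r W, f x ∈ nbhd G r x) {w : β} (hw : w ∈ W) :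
    degSnd (fixedEdges G f) w ≤ r := by
  have h_split : degSnd (fixedEdges G f) w + #{e ∈ G | e.2 = w ∧ f (edge e) ≠ edge e} =
      degSnd G w := degSnd_filter_add G _ w
  have h_slots_left : slotsSnd G r {w} ⊆ left G r W :=
    (image_subset_image (sigma_mono (singleton_subset_iff.2 hw) fun _ => subset_rfl)).trans
      subset_union_right
  have h_moved : degSnd G w - r ≤ #{e ∈ G | e.2 = w ∧ f (edge e) ≠ edge e} := by
    calc degSnd G w - r = #(slotsSnd G r {w}) := by simp [card_slotsSnd]
      _ = #((slotsSnd G r {w}).image f) := (card_image_of_injOn (hf.mono h_slots_left)).symm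
      _ ≤ #({e ∈ G | e.2 = w ∧ f (edge e) ≠ edge e}.image edge) := card_le_card ?_
      _ ≤ _ := card_image_le
    intro y hy
    obtain ⟨x, hx, rfl⟩ := mem_image.1 hy
    obtain ⟨⟨b, j⟩, hbj, rfl⟩ := mem_image.1 hx
    have hxl : slotSnd b j ∈ left G r W := h_slots_left hx
    obtain ⟨e, he, hfe⟩ := mem_image.1 (hfN _ hxl)
    obtain ⟨heG, rfl⟩ := mem_filter.1 he
    refine mem_image.2 ⟨e, mem_filter.2 ⟨heG, ?_, fun hfix => ?_⟩, hfe⟩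
    · simpa using (mem_sigma.1 hbj).1
    · cases hf (by simpa using heG) hxl (hfix.trans hfe)
  omega

end Gadget

end

section Factors

variable [DecidableEq α] [DecidableEq β] {G : Finset (α × β)} {U : Finset α} {W : Finset β}

theorem exists_isRegularOn_subset_of_cut {r : ℕ} (hG : G ⊆ U ×ˢ W) (hUW : #U = #W)
    (hU : ∀ u ∈ U, r ≤ degFst G u) (hW : ∀ w ∈ W, r ≤ degSnd G w)
    (hcut : ∀ S ⊆ U, ∀ T ⊆ W, r * #S ≤ #{e ∈ G | e.1 ∈ S ∧ e.2 ∉ T} + r * #T) :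
    ∃ G' ⊆ G, IsRegularOn G' U W r := by
  obtain ⟨f, hf, hfN⟩ := (Gadget.left G r W).exists_injOn_of_forall_card_le_card_biUnion
    (Gadget.nbhd G r) fun B hB => Gadget.card_le_card_biUnion_nbhd hG hW hcut hB
  have hsub : Gadget.fixedEdges G f ⊆ G := filter_subset _ _
  exact ⟨_, hsub, isRegularOn_of_le_degFst_of_degSnd_le (hsub.trans hG) hUW
    (fun u hu => Gadget.le_degFst_fixedEdges hf hfN (hU u hu))
    fun w hw => Gadget.degSnd_fixedEdges_le hf hfN hw⟩

theorem IsRegularOn.exists_isRegularOn_one_subset {k : ℕ} (hG : G ⊆ U ×ˢ W) (hUW : #U = #W)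
    (h : IsRegularOn G U W (k + 1)) : ∃ M ⊆ G, IsRegularOn M U W 1 := by
  refine exists_isRegularOn_subset_of_cut hG hUW (fun u hu => by rw [h.1 u hu]; omega)
    (fun w hw => by rw [h.2 w hw]; omega) fun S hS T hT => ?_
  have h_split := sum_degFst_eq_add G S T
  have h_inside := card_filter_mem_mem_le_sum_degSnd G S T
  rw [sum_congr rfl fun u hu => h.1 u (hS hu), sum_const, smul_eq_mul] at h_split
  rw [sum_congr rfl fun w hw => h.2 w (hT hw), sum_const, smul_eq_mul] at h_inside
  have : #S * (k + 1) ≤ (#{e ∈ G | e.1 ∈ S ∧ e.2 ∉ T} + #T) * (k + 1) := by nlinarith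
  simpa [add_comm] using Nat.le_of_mul_le_mul_right this k.succ_pos

open Function in
theorem IsRegularOn.exists_perfectMatchings (hUW : #U = #W) :
    ∀ {k : ℕ} {G : Finset (α × β)}, G ⊆ U ×ˢ W → IsRegularOn G U W k →
      ∃ F : Fin k → Finset (α × β), (∀ j, F j ⊆ G ∧ IsRegularOn (F j) U W 1) ∧
        Pairwise (Disjoint on F)
  | 0, _, _, _ => ⟨Fin.elim0, fun j => j.elim0, fun j => j.elim0⟩
  | k + 1, G, hG, h => by
    obtain ⟨M, hMG, hM⟩ := h.exists_isRegularOn_one_subset hG hUW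
    have h_rest : IsRegularOn (G \ M) U W k := by
      refine ⟨fun u hu => ?_, fun w hw => ?_⟩
      · have := degFst_sdiff_add G hMG u
        rw [h.1 u hu, hM.1 u hu] at this
        omega
      · have := degSnd_sdiff_add G hMG w
        rw [h.2 w hw, hM.2 w hw] at this
        omega
    obtain ⟨F, hF, hF_disj⟩ := exists_perfectMatchings hUW (sdiff_subset.trans hG) h_rest
    have hMF : ∀ j, Disjoint M (F j) := fun j => disjoint_of_subset_right (hF j).1 disjoint_sdiff
    refine ⟨Fin.cons M F, Fin.cases ⟨hMG, hM⟩ fun j => ⟨(hF j).1.trans sdiff_subset, (hF j).2⟩,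
      fun i j hij => ?_⟩
    induction i using Fin.cases <;> induction j using Fin.cases
    · exact absurd rfl hij
    · exact hMF _
    · exact (hMF _).symm
    · exact hF_disj fun h => hij (congrArg _ h)

end Factors

section NearRegular

theorem mul_sub_le_mul_sub_mul {s t δ d : ℝ} (ht : 0 ≤ t) (hts : t ≤ s) (hsδ : s ≤ δ)
    (hdδ : d ≤ δ) : d * (s - t) ≤ s * δ - s * t := by
  have h : s * δ - s * t - d * (s - t) = (s - t) * (δ - d) + t * (δ - s) := by ring
  linarith [mul_nonneg (sub_nonneg.2 hts) (sub_nonneg.2 hdδ), mul_nonneg ht (sub_nonneg.2 hsδ)]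

/-- `h₁` settles `s ≤ δ` and `h₃` settles `m - t ≤ δ`; otherwise `t < m - δ < s - t`, and then
`h₂` suffices. -/
theorem mul_sub_le_of_cut_bounds {m s t E δ Δ d : ℝ} (hs : s ≤ m) (ht : 0 ≤ t) (hE : 0 ≤ E)
    (hd : 0 ≤ d) (hδΔ : δ ≤ Δ) (hgap : Δ - δ ≤ δ - d) (hδ : 2 * m ≤ 3 * δ)
    (h₁ : s * δ - s * t ≤ E) (h₂ : s * δ - t * Δ ≤ E)
    (h₃ : (m - t) * δ - (m - t) * (m - s) ≤ E) : d * (s - t) ≤ E := by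
  rcases le_total s t with hst | hts
  · nlinarith [mul_nonneg hd (sub_nonneg.2 hst)]
  by_cases hsδ : s ≤ δ
  · exact (mul_sub_le_mul_sub_mul ht hts hsδ (by linarith)).trans h₁
  by_cases htδ : m - t ≤ δ
  · have := mul_sub_le_mul_sub_mul (s := m - t) (sub_nonneg.2 hs) (by linarith) htδ (d := d)
      (by linarith)
    linarith [show m - t - (m - s) = s - t by ring]
  have hts' : t ≤ s - t := by linarith
  nlinarith [mul_le_mul_of_nonneg_left hgap (sub_nonneg.2 hts),
    mul_le_mul_of_nonneg_right hts' (sub_nonneg.2 hδΔ)]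

variable [DecidableEq α] [DecidableEq β] {G : Finset (α × β)} {U : Finset α} {W : Finset β}
  {δ Δ : ℝ}

theorem card_mul_sub_card_mul_le_card_cut (S : Finset α) (T : Finset β)
    (hS : ∀ u ∈ S, δ ≤ degFst G u) : #S * δ - #S * #T ≤ (#{e ∈ G | e.1 ∈ S ∧ e.2 ∉ T} : ℝ) := by
  have h_lower : (#S : ℝ) * δ ≤ ∑ u ∈ S, (degFst G u : ℝ) := by
    simpa using card_nsmul_le_sum S (fun u => (degFst G u : ℝ)) δ hS
  have h_split : ∑ u ∈ S, (degFst G u : ℝ) =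
      #{e ∈ G | e.1 ∈ S ∧ e.2 ∈ T} + #{e ∈ G | e.1 ∈ S ∧ e.2 ∉ T} := by
    exact_mod_cast sum_degFst_eq_add G S T
  have h_inside : (#{e ∈ G | e.1 ∈ S ∧ e.2 ∈ T} : ℝ) ≤ #S * #T := by
    exact_mod_cast card_filter_mem_mem_le_mul G S T
  linarith

theorem card_mul_sub_card_mul_le_card_cut_of_degSnd_le (S : Finset α) (T : Finset β)
    (hS : ∀ u ∈ S, δ ≤ degFst G u) (hT : ∀ w ∈ T, degSnd G w ≤ Δ) :
    #S * δ - #T * Δ ≤ (#{e ∈ G | e.1 ∈ S ∧ e.2 ∉ T} : ℝ) := by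
  have h_lower : (#S : ℝ) * δ ≤ ∑ u ∈ S, (degFst G u : ℝ) := by
    simpa using card_nsmul_le_sum S (fun u => (degFst G u : ℝ)) δ hS
  have h_upper : ∑ w ∈ T, (degSnd G w : ℝ) ≤ #T * Δ := by
    simpa using sum_le_card_nsmul T (fun w => (degSnd G w : ℝ)) Δ hT
  have h_split : ∑ u ∈ S, (degFst G u : ℝ) =
      #{e ∈ G | e.1 ∈ S ∧ e.2 ∈ T} + #{e ∈ G | e.1 ∈ S ∧ e.2 ∉ T} := by
    exact_mod_cast sum_degFst_eq_add G S T
  have h_inside : (#{e ∈ G | e.1 ∈ S ∧ e.2 ∈ T} : ℝ) ≤ ∑ w ∈ T, (degSnd G w : ℝ) := by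
    exact_mod_cast card_filter_mem_mem_le_sum_degSnd G S T
  linarith

theorem card_sdiff_mul_sub_le_card_cut (hG : G ⊆ U ×ˢ W) {S : Finset α} {T : Finset β} (hS : S ⊆ U)
    (hT : T ⊆ W) (hW : ∀ w ∈ W, δ ≤ degSnd G w) :
    (#W - #T) * δ - (#W - #T) * (#U - #S) ≤ (#{e ∈ G | e.1 ∈ S ∧ e.2 ∉ T} : ℝ) := by
  have hWT : (#(W \ T) : ℝ) = #W - #T := by
    rw [card_sdiff_of_subset hT, Nat.cast_sub (card_le_card hT)]
  have hUS : (#(U \ S) : ℝ) = #U - #S := by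
    rw [card_sdiff_of_subset hS, Nat.cast_sub (card_le_card hS)]
  have h_lower : (#(W \ T) : ℝ) * δ ≤ ∑ w ∈ W \ T, (degSnd G w : ℝ) := by
    simpa using card_nsmul_le_sum (W \ T) (fun w => (degSnd G w : ℝ)) δ
      fun w hw => hW w (mem_sdiff.1 hw).1
  have h_cut : {e ∈ G | e.1 ∈ S ∧ e.2 ∈ W \ T} = {e ∈ G | e.1 ∈ S ∧ e.2 ∉ T} :=
    filter_congr fun e he => by simp [(mem_product.1 (hG he)).2]
  have h_outside : #{e ∈ G | e.1 ∉ S ∧ e.2 ∈ W \ T} ≤ #(U \ S) * #(W \ T) := by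
    refine le_trans (card_le_card (monotone_filter_right _ fun e he h => ?_))
      (card_filter_mem_mem_le_mul G (U \ S) (W \ T))
    exact ⟨mem_sdiff.2 ⟨(mem_product.1 (hG he)).1, h.1⟩, h.2⟩
  have h_split : ∑ w ∈ W \ T, (degSnd G w : ℝ) =
      #{e ∈ G | e.1 ∈ S ∧ e.2 ∉ T} + #{e ∈ G | e.1 ∉ S ∧ e.2 ∈ W \ T} := by
    rw [← h_cut]
    exact_mod_cast sum_degSnd_eq_add G S (W \ T)
  have h_outside' : (#{e ∈ G | e.1 ∉ S ∧ e.2 ∈ W \ T} : ℝ) ≤ (#W - #T) * (#U - #S) := by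
    rw [← hWT, ← hUS, mul_comm]
    exact_mod_cast h_outside
  rw [← hWT] at h_outside' ⊢
  linarith

theorem cut_condition_of_degree_bounds {m d : ℕ} (hG : G ⊆ U ×ˢ W) (hU : #U = m) (hW : #W = m)
    (hFst : ∀ u ∈ U, δ ≤ degFst G u) (hSnd : ∀ w ∈ W, δ ≤ degSnd G w ∧ degSnd G w ≤ Δ)
    (hδΔ : δ ≤ Δ) (hgap : Δ - δ ≤ δ - d) (hδ : 2 * m ≤ 3 * δ) :
    ∀ S ⊆ U, ∀ T ⊆ W, d * #S ≤ #{e ∈ G | e.1 ∈ S ∧ e.2 ∉ T} + d * #T := by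
  intro S hS T hT
  have h₁ := card_mul_sub_card_mul_le_card_cut S T fun u hu => hFst u (hS hu)
  have h₂ := card_mul_sub_card_mul_le_card_cut_of_degSnd_le S T (fun u hu => hFst u (hS hu))
    fun w hw => (hSnd w (hT hw)).2
  have h₃ := card_sdiff_mul_sub_le_card_cut hG hS hT fun w hw => (hSnd w hw).1
  rw [hU, hW] at h₃
  have hsm : (#S : ℝ) ≤ m := by exact_mod_cast hU ▸ card_le_card hS
  have := mul_sub_le_of_cut_bounds hsm (Nat.cast_nonneg _) (Nat.cast_nonneg _) (Nat.cast_nonneg d)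
    hδΔ hgap hδ h₁ h₂ h₃
  have : (d : ℝ) * #S ≤ #{e ∈ G | e.1 ∈ S ∧ e.2 ∉ T} + d * #T := by linarith
  exact_mod_cast this

end NearRegular

/-- Lemma 4.2: an almost-regular balanced bipartite graph contains a spanning
`(1-μ-ρ)m`-regular subgraph, and in particular `(1-μ-ρ)m` edge-disjoint perfect matchings. -/
theorem stmt0 :
    ∃ ρ₀ : ℝ, 0 < ρ₀ ∧ ∀ ρ : ℝ, 0 < ρ → ρ ≤ ρ₀ →
    ∃ ε₀ : ℝ, 0 < ε₀ ∧ ∀ ε : ℝ, 0 < ε → ε ≤ ε₀ →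
    ∃ m₀ : ℕ, ∀ m : ℕ, m₀ ≤ m →
    ∀ μ : ℝ, 0 ≤ μ → μ ≤ 1/4 →
    (∃ a : ℕ, (a : ℝ) = μ * m) → (∃ b : ℕ, (b : ℝ) = ρ * m) →
    ∀ (V : Type) [inst : DecidableEq V], ∀ (U W : Finset V) (Γ : Finset (V × V)),
      Disjoint U W → U.card = m → W.card = m →
      (∀ e ∈ Γ, e.1 ∈ U ∧ e.2 ∈ W) →
      (∀ v ∈ U ∪ W, (1 - μ - ε) * m ≤ (bdeg Γ v : ℝ) ∧ (bdeg Γ v : ℝ) ≤ (1 - μ + ε) * m) →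
      ∃ d : ℕ, (d : ℝ) = (1 - μ - ρ) * m ∧
        (∃ Γ' ⊆ Γ, ∀ v ∈ U ∪ W, bdeg Γ' v = d) ∧
        (∃ F : Fin d → Finset (V × V),
          (∀ j, F j ⊆ Γ ∧ IsPerfectMatching U W (F j)) ∧
          ∀ j j', j ≠ j' → Disjoint (F j) (F j')) := by
  refine ⟨1/4, by norm_num, fun ρ hρ hρ₀ => ⟨ρ / 3, by positivity, fun ε hε hε₀ => ⟨0, ?_⟩⟩⟩
  intro m _ μ hμ hμ₀ ⟨a, ha⟩ ⟨b, hb⟩ V _ U W Γ hUW hU hW hΓ hdeg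
  have hΓ' : Γ ⊆ U ×ˢ W := fun e he => mem_product.2 (hΓ e he)
  have hm : (0 : ℝ) ≤ m := m.cast_nonneg
  have hab : a + b ≤ m := by
    have : ((a + b : ℕ) : ℝ) ≤ m := by push_cast; nlinarith
    exact_mod_cast this
  refine ⟨m - a - b, ?_⟩
  have hd : ((m - a - b : ℕ) : ℝ) = (1 - μ - ρ) * m := by
    rw [Nat.sub_sub, Nat.cast_sub hab]
    push_cast
    linarith
  have hFst : ∀ u ∈ U, (1 - μ - ε) * m ≤ degFst Γ u := fun u hu => by
    simpa [bdeg_eq_degFst hUW hΓ' hu] using (hdeg u (mem_union_left _ hu)).1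
  have hSnd : ∀ w ∈ W, (1 - μ - ε) * m ≤ degSnd Γ w ∧ degSnd Γ w ≤ (1 - μ + ε) * m :=
    fun w hw => by simpa [bdeg_eq_degSnd hUW hΓ' hw] using hdeg w (mem_union_right _ hw)
  have hdδ : ((m - a - b : ℕ) : ℝ) ≤ (1 - μ - ε) * m := by rw [hd]; nlinarith
  have hcut := cut_condition_of_degree_bounds hΓ' hU hW hFst hSnd (by nlinarith)
    (by rw [hd]; nlinarith) (by nlinarith)
  obtain ⟨Γ', hΓ'Γ, hreg⟩ := exists_isRegularOn_subset_of_cut hΓ' (hU.trans hW.symm)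
    (fun u hu => by exact_mod_cast hdδ.trans (hFst u hu))
    (fun w hw => by exact_mod_cast hdδ.trans (hSnd w hw).1) hcut
  have hΓ'UW := hΓ'Γ.trans hΓ'
  obtain ⟨F, hF, hF_disj⟩ := hreg.exists_perfectMatchings (hU.trans hW.symm) hΓ'UW
  exact ⟨hd, ⟨Γ', hΓ'Γ, hreg.bdeg_eq hUW hΓ'UW⟩, F, fun j => ⟨(hF j).1.trans hΓ'Γ,
    (hF j).2.isPerfectMatching hUW ((hF j).1.trans hΓ'UW)⟩, fun j j' h => hF_disj h⟩
end

section
/- Let A, A₀, B, B₀ partition a vertex set V, let J be a Hamilton exceptional system, and let J* = J*_A + J*_B be the associated matching of fictive edges. If C_A is a Hamilton cycle on A consistent with J*_A and C_B is a Hamilton cycle on B consistent with J*_B, then C_A + C_B − J* + J is a Hamilton cycle on V. -/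
open SimpleGraph

/-- The degree of a vertex, as the cardinality of its neighbourhood. -/
noncomputable def degS {V : Type*} (J : SimpleGraph V) (v : V) : ℕ := (J.neighborSet v).ncard

/-- A path system: a graph which is a union of vertex-disjoint paths. -/
def PathSystem {V : Type*} (J : SimpleGraph V) : Prop := J.IsAcyclic ∧ ∀ v, degS J v ≤ 2

/-- The matching `J*_{AB}` induced by the nontrivial paths of a path system `J`. -/
def starAB {V : Type*} (J : SimpleGraph V) : SimpleGraph V where
  Adj x y := x ≠ y ∧ degS J x = 1 ∧ degS J y = 1 ∧ J.Reachable x y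
  symm := ⟨fun _ _ h => ⟨h.1.symm, h.2.2.1, h.2.1, h.2.2.2.symm⟩⟩
  loopless := ⟨fun _ h => h.1 rfl⟩

/-- The cycle graph traced out by `f : ZMod N → V`. -/
def cycOn {V : Type*} {N : ℕ} (f : ZMod N → V) : SimpleGraph V :=
  SimpleGraph.fromEdgeSet {e | ∃ i : ZMod N, e = s(f i, f (i + 1))}

/-- The cycle given by `f` visits the vertices `w 0, w 1, …, w (r-1)` in this (cyclic) order. -/
def VisitsInOrder {V : Type*} {N : ℕ} (f : ZMod N → V) (r : ℕ) (w : ℕ → V) : Prop :=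
  ∃ (i₀ : ZMod N) (o : ℕ → ℕ), StrictMonoOn o (Set.Iio r) ∧
    ∀ j < r, o j < N ∧ f (i₀ + (o j : ZMod N)) = w j

/-- `H` is a Hamilton cycle on the vertex set `A`. -/
def IsHamCycleOn {V : Type*} (H : SimpleGraph V) (A : Set V) : Prop :=
  ∃ (N : ℕ) (f : ZMod N → V), 3 ≤ N ∧ Function.Injective f ∧ Set.range f = A ∧ H = cycOn f

/-!
At a vertex `v ∈ A` the graph `G = C_A + C_B - J* + J` keeps the two edges of `C_A`, loses the
`J*_A`-edges at `v` and gains the `J`-edges at `v`. Both numbers equal `deg_J v ∈ {0, 1}`: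
`starAB J` matches each endpoint of a path of `J` with the other endpoint, so `J*_A` is a
perfect matching on the endpoints lying in `A` (the fictive edges `x_{2i} x_{2i+1}` pairing those
whose partner is in `B`). The same holds in `B`, and the vertices of `A₀ ∪ B₀` keep their two
`J`-edges, so `G` is 2-regular; a connected finite 2-regular graph is a Hamilton cycle.

For connectivity, every edge of `C_A` or `C_B` that is not fictive joins vertices that stay
connected in `G` (if it was removed, it lies in `J*_{AB}` and is replaced by a path of `J`).
Since `C_A` visits `x_0, …, x_{2ℓ-1}` in this order, the arc of `C_A` from `x_{2i+1}` to
`x_{2i+2}` contains no fictive edge, and likewise the arc of `C_B` from `y_{2i}` to `y_{2i+1}`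
(for `ℓ = 1` go round `C_B` the other way). With the paths `x_j … y_j` of `J` these arcs join
all `y_j` in a zigzag, and every vertex reaches some `x_j` or `y_j`.
-/

theorem ZMod.two_ne_zero_of_three_le {N : ℕ} (hN : 3 ≤ N) : (2 : ZMod N) ≠ 0 := fun h => by
  have := Nat.le_of_dvd two_pos ((ZMod.natCast_eq_zero_iff 2 N).mp (by exact_mod_cast h))
  omega

theorem ZMod.eq_or_of_natCast_eq {m a b : ℕ} (ha : a ≤ m) (hb : b ≤ m) (h : (a : ZMod m) = b) :
    a = b ∨ a = 0 ∧ b = m ∨ a = m ∧ b = 0 := by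
  rw [ZMod.natCast_eq_natCast_iff'] at h
  rcases ha.lt_or_eq with ha | rfl <;> rcases hb.lt_or_eq with hb | rfl <;>
    simp_all [Nat.mod_eq_of_lt]

theorem Function.Injective.injOn_natCast_add {V : Type*} {m : ℕ} {z : ZMod m → V}
    (hz : Function.Injective z) (c : ℕ) :
    Set.InjOn (fun n : ℕ => z ((n + c : ℕ) : ZMod m)) (Set.Iio m) := fun a ha b hb h => by
  have := add_right_cancel (by exact_mod_cast hz h : (a : ZMod m) + c = b + c)
  rwa [ZMod.natCast_eq_natCast_iff', Nat.mod_eq_of_lt ha, Nat.mod_eq_of_lt hb] at this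

section CycOn

variable {V : Type*} {N : ℕ} {f : ZMod N → V}

theorem cycOn_adj {u v : V} :
    (cycOn f).Adj u v ↔ (∃ i, s(u, v) = s(f i, f (i + 1))) ∧ u ≠ v := by
  simp only [cycOn, fromEdgeSet_adj, Set.mem_ofPred_eq]

theorem mem_range_of_cycOn_adj {u v : V} (h : (cycOn f).Adj u v) : u ∈ Set.range f := by
  obtain ⟨⟨i, hi⟩, -⟩ := cycOn_adj.mp h
  rcases Sym2.eq_iff.mp hi with ⟨rfl, -⟩ | ⟨rfl, -⟩
  exacts [⟨i, rfl⟩, ⟨i + 1, rfl⟩]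

theorem cycOn_neighborSet_eq_empty {v : V} (hv : v ∉ Set.range f) :
    (cycOn f).neighborSet v = ∅ :=
  Set.eq_empty_of_forall_notMem fun _ h => hv (mem_range_of_cycOn_adj h)

theorem cycOn_adj_add_one (hf : Function.Injective f) (hN : 2 ≤ N) (i : ZMod N) :
    (cycOn f).Adj (f i) (f (i + 1)) :=
  cycOn_adj.mpr ⟨⟨i, rfl⟩, fun h => by
    have := ZMod.one_eq_zero_iff.mp (add_eq_left.mp (hf h).symm)
    omega⟩

theorem cycOn_neighborSet (hf : Function.Injective f) (hN : 3 ≤ N) (k : ZMod N) :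
    (cycOn f).neighborSet (f k) = {f (k - 1), f (k + 1)} := by
  ext w
  simp only [mem_neighborSet, Set.mem_insert_iff, Set.mem_singleton_iff]
  refine ⟨fun h => ?_, ?_⟩
  · obtain ⟨⟨i, hi⟩, -⟩ := cycOn_adj.mp h
    rcases Sym2.eq_iff.mp hi with ⟨h1, rfl⟩ | ⟨h1, rfl⟩
    · rw [hf h1]; exact Or.inr rfl
    · rw [hf h1, add_sub_cancel_right]; exact Or.inl rfl
  · rintro (rfl | rfl)
    · simpa using (cycOn_adj_add_one hf (by omega) (k - 1)).symm
    · exact cycOn_adj_add_one hf (by omega) k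

theorem ncard_cycOn_neighborSet (hf : Function.Injective f) (hN : 3 ≤ N) (k : ZMod N) :
    ((cycOn f).neighborSet (f k)).ncard = 2 := by
  rw [cycOn_neighborSet hf hN k, Set.ncard_pair]
  refine fun h => ZMod.two_ne_zero_of_three_le hN ?_
  linear_combination (hf h).symm

theorem eq_of_mk_eq_mk_add_one (hf : Function.Injective f) (hN : 3 ≤ N) {j k : ZMod N}
    (h : s(f j, f (j + 1)) = s(f k, f (k + 1))) : j = k := by
  rcases Sym2.eq_iff.mp h with ⟨h1, -⟩ | ⟨h1, h2⟩
  · exact hf h1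
  · refine absurd ?_ (ZMod.two_ne_zero_of_three_le hN)
    linear_combination (hf h2) - (hf h1)

end CycOn

section Reachability

variable {V : Type*} {H : SimpleGraph V}

theorem reachable_of_forall_reachable_succ (g : ℕ → V) {a b : ℕ} (hab : a ≤ b)
    (h : ∀ q, a ≤ q → q < b → H.Reachable (g q) (g (q + 1))) : H.Reachable (g a) (g b) := by
  induction b, hab using Nat.le_induction with
  | base => rfl
  | succ b hab ih =>
    exact (ih fun q hq hqb => h q hq (by omega)).trans (h b hab (by omega))

theorem reachable_sdiff_sup_of_adj {C M J : SimpleGraph V} {u w : V} (hC : C.Adj u w)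
    (hM : M.Adj u w → J.Reachable u w) : ((C \ M) ⊔ J).Reachable u w := by
  by_cases h : M.Adj u w
  · exact (hM h).mono le_sup_right
  · exact Adj.reachable (Or.inl ⟨hC, h⟩)

theorem reachable_zigzag {ℓ : ℕ} (X Y : ℕ → V) (hXY : ∀ n < 2 * ℓ, H.Reachable (X n) (Y n))
    (hX : ∀ i, 2 * i + 2 < 2 * ℓ → H.Reachable (X (2 * i + 1)) (X (2 * i + 2)))
    (hY : ∀ i < ℓ, H.Reachable (Y (2 * i)) (Y (2 * i + 1))) {n : ℕ} (hn : n < 2 * ℓ) :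
    H.Reachable (Y n) (Y 0) := by
  have key : ∀ i < ℓ, H.Reachable (Y (2 * i)) (Y 0) ∧ H.Reachable (Y (2 * i + 1)) (Y 0) := by
    intro i hi
    induction i with
    | zero => exact ⟨.rfl, (hY 0 hi).symm⟩
    | succ i ih =>
      have h2 : H.Reachable (Y (2 * (i + 1))) (Y 0) :=
        (hXY _ (by omega)).symm.trans ((hX i (by omega)).symm.trans
          ((hXY _ (by omega)).trans (ih (by omega)).2))
      exact ⟨h2, (hY _ hi).symm.trans h2⟩
  obtain ⟨i, rfl | rfl⟩ := Nat.even_or_odd' n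
  exacts [(key i (by omega)).1, (key i (by omega)).2]

variable {N : ℕ} {f : ZMod N → V}

theorem exists_reachable_mem_of_forall_not_mem [NeZero N] {W : Set V} (hW : ∃ i, f i ∈ W)
    (hH : ∀ i, f i ∉ W → H.Reachable (f i) (f (i + 1))) (k : ZMod N) :
    ∃ w ∈ W, H.Reachable (f k) w := by
  classical
  have hex : ∃ t : ℕ, f (k + t) ∈ W := by
    obtain ⟨i, hi⟩ := hW
    exact ⟨(i - k).val, by rwa [ZMod.natCast_zmod_val, add_sub_cancel]⟩
  refine ⟨_, Nat.find_spec hex, ?_⟩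
  simpa using reachable_of_forall_reachable_succ (fun t : ℕ => f (k + t)) (Nat.zero_le _)
    fun q _ hq => by simpa [add_assoc] using hH _ (Nat.find_min hex hq)

theorem reachable_of_forall_ne_reachable [NeZero N] (i : ZMod N)
    (h : ∀ j ≠ i, H.Reachable (f j) (f (j + 1))) : H.Reachable (f (i + 1)) (f i) := by
  have hN := NeZero.pos N
  have key := reachable_of_forall_reachable_succ (H := H) (fun t : ℕ => f (i + 1 + t))
    (Nat.zero_le (N - 1)) fun q _ hq => by
      have hne : i + 1 + q ≠ i := fun he => by
        have : ((q + 1 : ℕ) : ZMod N) = 0 := by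
          push_cast; linear_combination he
        have := Nat.le_of_dvd (by omega) ((ZMod.natCast_eq_zero_iff _ _).mp this)
        omega
      simpa [add_assoc] using h _ hne
  simpa [Nat.cast_sub (by omega : 1 ≤ N)] using key

theorem VisitsInOrder.reachable_succ (hf : Function.Injective f) {r : ℕ} {w : ℕ → V}
    (hvis : VisitsInOrder f r w) {F : Set (Sym2 V)} (hF : ∀ e ∈ F, ∀ v ∈ e, ∃ m < r, v = w m)
    (hH : ∀ i, s(f i, f (i + 1)) ∉ F → H.Reachable (f i) (f (i + 1)))
    {j : ℕ} (hj : j + 1 < r) (hjF : s(w j, w (j + 1)) ∉ F) : H.Reachable (w j) (w (j + 1)) := by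
  obtain ⟨i₀, o, hmono, ho⟩ := hvis
  have hjr : j < r := by omega
  have hpos : ∀ {q m}, q < N → m < r → f (i₀ + q) = w m → q = o m := by
    intro q m hq hm he
    have := add_left_cancel (hf (he.trans (ho m hm).2.symm))
    rwa [ZMod.natCast_eq_natCast_iff', Nat.mod_eq_of_lt hq, Nat.mod_eq_of_lt (ho m hm).1] at this
  have hjj : o j < o (j + 1) := hmono hjr hj (by omega)
  have hN := (ho (j + 1) hj).1
  rw [← (ho j hjr).2, ← (ho (j + 1) hj).2]
  refine reachable_of_forall_reachable_succ (fun q : ℕ => f (i₀ + q)) hjj.le fun q hq1 hq2 => ?_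
  have hsucc : i₀ + ((q + 1 : ℕ) : ZMod N) = i₀ + q + 1 := by push_cast; ring
  simp only [hsucc]
  -- A fictive step joins two marked vertices, and the only ones between positions `o j` and
  -- `o (j + 1)` are `w j` and `w (j + 1)`.
  refine hH _ fun he => hjF ?_
  obtain ⟨m, hm, hqm⟩ := hF _ he _ (Sym2.mem_mk_left _ _)
  obtain ⟨m', hm', hqm'⟩ := hF _ he _ (Sym2.mem_mk_right _ _)
  rw [← hsucc] at hqm'
  have e := hpos (by omega) hm hqm
  have e' := hpos (by omega) hm' hqm'
  have hmj : m = j := le_antisymm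
    (Nat.lt_succ_iff.mp ((hmono.lt_iff_lt hm hj).mp (by omega)))
    ((hmono.le_iff_le hjr hm).mp (by omega))
  have hmj' : m' = j + 1 := le_antisymm
    ((hmono.le_iff_le hm' hj).mp (by omega))
    ((hmono.lt_iff_lt hjr hm').mp (by omega))
  subst hmj hmj'
  rwa [← hqm, ← hqm', hsucc]

theorem VisitsInOrder.exists_reachable [NeZero N] {r : ℕ} {w : ℕ → V} (hvis : VisitsInOrder f r w)
    (hr : 0 < r) {F : Set (Sym2 V)} (hF : ∀ e ∈ F, ∀ v ∈ e, ∃ m < r, v = w m)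
    (hH : ∀ i, s(f i, f (i + 1)) ∉ F → H.Reachable (f i) (f (i + 1))) (k : ZMod N) :
    ∃ m < r, H.Reachable (f k) (w m) := by
  obtain ⟨i₀, o, -, ho⟩ := hvis
  obtain ⟨_, ⟨m, hm, rfl⟩, hreach⟩ := exists_reachable_mem_of_forall_not_mem
    (W := {v | ∃ m < r, v = w m}) ⟨_, 0, hr, (ho 0 hr).2⟩
    (fun i hi => hH i fun he => hi (hF _ he _ (Sym2.mem_mk_left _ _))) k
  exact ⟨m, hm, hreach⟩

end Reachability

theorem isHamCycleOn_univ_of_connected {V : Type*} [Finite V] {G : SimpleGraph V}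
    (hG : G.Connected) (h2 : ∀ v, (G.neighborSet v).ncard = 2) : IsHamCycleOn G Set.univ := by
  classical
  have := Fintype.ofFinite V
  obtain ⟨v⟩ := hG.nonempty
  have hcyc : G.IsCycles := fun w _ => h2 w
  obtain ⟨p, hp, hverts⟩ := hcyc.exists_cycle_toSubgraph_verts_eq_connectedComponentSupp
    (c := G.connectedComponentMk v) rfl (Set.nonempty_of_ncard_ne_zero (by simp [h2]))
  have hverts' : ∀ w, w ∈ p.toSubgraph.verts := fun w => by
    rw [hverts, ConnectedComponent.mem_supp_iff, ConnectedComponent.eq]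
    exact hG.preconnected w v
  have hL := hp.three_le_length
  have : NeZero p.length := ⟨by omega⟩
  set f : ZMod p.length → V := fun i => p.getVert i.val with hf
  have hfcast : ∀ n ≤ p.length, f n = p.getVert n := fun n hn => by
    rcases hn.lt_or_eq with hn | rfl
    · simp [hf, ZMod.val_natCast_of_lt hn]
    · simp [hf]
  have hfsucc : ∀ i : ZMod p.length, f (i + 1) = p.getVert (i.val + 1) := fun i => by
    rw [← hfcast _ (ZMod.val_lt i), Nat.cast_succ, ZMod.natCast_zmod_val]
  refine ⟨p.length, f, hL, fun i j h => ZMod.val_injective _ ?_,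
    Set.eq_univ_of_forall fun w => ?_, ?_⟩
  · exact hp.getVert_injOn' (show i.val ≤ p.length - 1 by have := i.val_lt; omega)
      (show j.val ≤ p.length - 1 by have := j.val_lt; omega) h
  · obtain ⟨n, hn, hnl⟩ := Walk.mem_support_iff_exists_getVert.mp
      (p.mem_verts_toSubgraph.mp (hverts' w))
    exact ⟨n, by rw [hfcast n hnl, hn]⟩
  · ext u w
    rw [← hp.adj_toSubgraph_iff_of_isCycles hcyc (hverts' u), Walk.toSubgraph_adj_iff, cycOn_adj]
    constructor
    · rintro ⟨i, he, hi⟩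
      refine ⟨⟨i, ?_⟩, ?_⟩
      · rw [hfcast i hi.le, ← Nat.cast_succ, hfcast (i + 1) hi, he]
      · rintro rfl
        exact (p.toSubgraph.adj_sub ((Walk.toSubgraph_adj_iff p).mpr ⟨i, he, hi⟩)).ne rfl
    · rintro ⟨⟨i, he⟩, -⟩
      exact ⟨i.val, by rw [he, hfsucc], ZMod.val_lt i⟩

section PathSystem

variable {V : Type*} {J : SimpleGraph V}

theorem SimpleGraph.Reachable.mem_of_forall_adj_mem {s : Set V}
    (hs : ∀ z ∈ s, ∀ w, J.Adj z w → w ∈ s) {a b : V} (h : J.Reachable a b) (ha : a ∈ s) :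
    b ∈ s := by
  obtain ⟨q⟩ := h
  induction q with
  | nil => exact ha
  | cons hadj _ ih => exact ih (hs _ ha _ hadj)

variable [Finite V]

theorem exists_isPath_forall_adj_mem_support (J : SimpleGraph V) (v : V) :
    ∃ u, ∃ p : J.Walk v u, p.IsPath ∧ ∀ w, J.Adj u w → w ∈ p.support := by
  classical
  have := Fintype.ofFinite V
  let P : ℕ → Prop := fun n => ∃ u, ∃ p : J.Walk v u, p.IsPath ∧ p.length = n
  have hP : P (Nat.findGreatest P (Fintype.card V)) :=
    Nat.findGreatest_spec (P := P) (Nat.zero_le _) ⟨v, .nil, .nil, rfl⟩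
  obtain ⟨u, p, hp, hlen⟩ := hP
  refine ⟨u, p, hp, fun w hw => ?_⟩
  by_contra hwp
  have hq := hp.concat hwp hw
  have := hq.length_lt
  rw [Walk.length_concat] at this
  exact Nat.findGreatest_is_greatest (P := P) (n := Fintype.card V) (lt_add_one _) (by omega)
    ⟨w, _, hq, by rw [Walk.length_concat, hlen]⟩

theorem degS_le_one_of_forall_adj_mem_support (hJ : J.IsAcyclic) {v u : V} {p : J.Walk v u}
    (hp : p.IsPath) (hu : ∀ w, J.Adj u w → w ∈ p.support) : degS J u ≤ 1 := by
  have hsub : J.neighborSet u ⊆ {p.penultimate} := fun w hw =>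
    hJ.eq_penultimate_of_adj_end hp hw (hu w hw)
  exact (Set.ncard_le_ncard hsub).trans (Set.ncard_singleton _).le

theorem exists_reachable_degS_le_one (hJ : J.IsAcyclic) (v : V) :
    ∃ u, J.Reachable v u ∧ degS J u ≤ 1 :=
  have ⟨u, p, hp, hu⟩ := exists_isPath_forall_adj_mem_support J v
  ⟨u, p.reachable, degS_le_one_of_forall_adj_mem_support hJ hp hu⟩

theorem SimpleGraph.Walk.IsPath.neighborSet_eq_toSubgraph (hJ : PathSystem J) {v u : V}
    {p : J.Walk v u} (hp : p.IsPath) {i : ℕ} (h0 : i ≠ 0) (hi : i < p.length) :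
    J.neighborSet (p.getVert i) = p.toSubgraph.neighborSet (p.getVert i) :=
  (Set.eq_of_subset_of_ncard_le (p.toSubgraph.neighborSet_subset _)
    (by rw [hp.ncard_neighborSet_toSubgraph_internal_eq_two h0 hi]; exact hJ.2 _)).symm

theorem SimpleGraph.Walk.IsPath.mem_support_of_reachable (hJ : PathSystem J) {v u : V}
    {p : J.Walk v u} (hp : p.IsPath) (hv : ∀ w, J.Adj v w → w ∈ p.support)
    (hu : ∀ w, J.Adj u w → w ∈ p.support) {w : V} (hw : J.Reachable v w) : w ∈ p.support := by
  have hclosed : ∀ z ∈ p.support, ∀ w, J.Adj z w → w ∈ p.support := by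
    intro z hz w hzw
    obtain ⟨i, rfl, hi⟩ := Walk.mem_support_iff_exists_getVert.mp hz
    rcases Nat.eq_zero_or_pos i with rfl | h0
    · exact hv w (by simpa using hzw)
    rcases hi.lt_or_eq with hi | rfl
    · have : w ∈ p.toSubgraph.neighborSet (p.getVert i) := by
        rw [← hp.neighborSet_eq_toSubgraph hJ h0.ne' hi]; exact hzw
      exact Walk.mem_support_of_adj_toSubgraph this.symm
    · exact hu w (by simpa using hzw)
  exact hw.mem_of_forall_adj_mem hclosed p.start_mem_support

theorem PathSystem.exists_starAB_neighborSet_eq (hJ : PathSystem J) {v : V}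
    (hv : degS J v = 1) : ∃ w, (starAB J).neighborSet v = {w} := by
  -- A maximal path from the leaf `v` contains everything reachable from `v`, since its inner
  -- vertices have both their neighbours on it; so its other end is the only other leaf there.
  obtain ⟨u, p, hp, hu⟩ := exists_isPath_forall_adj_mem_support J v
  obtain ⟨n, hn⟩ := Set.ncard_eq_one.mp hv
  have hvn : J.Adj v n := by simp [← mem_neighborSet, hn]
  have hnil : ¬p.Nil := fun hnil => by
    obtain rfl := hnil.eq
    have := hu n hvn
    simp only [Walk.nil_iff_support_eq.mp hnil, List.mem_singleton] at this
    exact hvn.ne this.symm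
  have hv' : ∀ w, J.Adj v w → w ∈ p.support := fun w hw => by
    have hsnd : p.snd ∈ J.neighborSet v := p.adj_snd hnil
    rw [hn, Set.mem_singleton_iff] at hsnd
    obtain rfl : w = n := by simpa [← mem_neighborSet, hn] using hw
    exact hsnd ▸ p.getVert_mem_support 1
  have hu1 : degS J u = 1 := le_antisymm (degS_le_one_of_forall_adj_mem_support hJ.1 hp hu)
    ((Set.ncard_pos (Set.toFinite _)).mpr ⟨_, (p.adj_penultimate hnil).symm⟩)
  have huv : u ≠ v := fun h => hnil (by
    subst h
    exact Walk.length_eq_zero_iff.mp (hp.getVert_injOn (by simp) (by simp) (by simp)).symm)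
  refine ⟨u, Set.ext fun w => ⟨fun ⟨hwv, _, hw1, hr⟩ => ?_, ?_⟩⟩
  · obtain ⟨i, rfl, hi⟩ :=
      Walk.mem_support_iff_exists_getVert.mp (hp.mem_support_of_reachable hJ hv' hu hr)
    rcases Nat.eq_zero_or_pos i with rfl | h0
    · exact absurd (p.getVert_zero) hwv.symm
    rcases hi.lt_or_eq with hi | rfl
    · rw [degS, hp.neighborSet_eq_toSubgraph hJ h0.ne' hi,
        hp.ncard_neighborSet_toSubgraph_internal_eq_two h0.ne' hi] at hw1
      omega
    · exact p.getVert_length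
  · rintro rfl
    exact ⟨huv.symm, hv, hu1, p.reachable⟩

end PathSystem

section FictiveEdges

variable {V : Type*}

def starEdgesIn (J : SimpleGraph V) (P : Set V) : Set (Sym2 V) :=
  {e | ∃ u v, e = s(u, v) ∧ (starAB J).Adj u v ∧ u ∈ P ∧ v ∈ P}

def pairEdges (Z : ℕ → V) (ℓ : ℕ) : Set (Sym2 V) :=
  {e | ∃ i : Fin ℓ, e = s(Z (2 * (i : ℕ)), Z (2 * (i : ℕ) + 1))}

theorem mk_mem_starEdgesIn {J : SimpleGraph V} {P : Set V} {u w : V} :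
    s(u, w) ∈ starEdgesIn J P ↔ (starAB J).Adj u w ∧ u ∈ P ∧ w ∈ P := by
  refine ⟨fun ⟨a, b, he, hab, ha, hb⟩ => ?_, fun ⟨h, hu, hw⟩ => ⟨u, w, rfl, h, hu, hw⟩⟩
  rcases Sym2.eq_iff.mp he with ⟨rfl, rfl⟩ | ⟨rfl, rfl⟩
  exacts [⟨hab, ha, hb⟩, ⟨hab.symm, hb, ha⟩]

variable {Z : ℕ → V} {ℓ : ℕ}

theorem exists_eq_of_mem_pairEdges {e : Sym2 V} (he : e ∈ pairEdges Z ℓ) {v : V} (hv : v ∈ e) :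
    ∃ m < 2 * ℓ, v = Z m := by
  obtain ⟨i, rfl⟩ := he
  rcases Sym2.mem_iff.mp hv with rfl | rfl
  exacts [⟨_, by omega, rfl⟩, ⟨_, by omega, rfl⟩]

theorem mk_mem_pairEdges_iff (hZ : Set.InjOn Z (Set.Iio (2 * ℓ))) {a b : ℕ} (ha : a < 2 * ℓ)
    (hb : b < 2 * ℓ) : s(Z a, Z b) ∈ pairEdges Z ℓ ↔ a / 2 = b / 2 ∧ a ≠ b := by
  have hinj : ∀ {m n}, m < 2 * ℓ → n < 2 * ℓ → Z m = Z n → m = n := fun hm hn h => hZ hm hn h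
  constructor
  · rintro ⟨i, he⟩
    have := i.2
    rcases Sym2.eq_iff.mp he with ⟨h1, h2⟩ | ⟨h1, h2⟩
    · have := hinj ha (by omega) h1; have := hinj hb (by omega) h2; omega
    · have := hinj ha (by omega) h1; have := hinj hb (by omega) h2; omega
  · rintro ⟨hab, hne⟩
    refine ⟨⟨a / 2, by omega⟩, ?_⟩
    rcases (by omega : a = 2 * (a / 2) ∧ b = 2 * (a / 2) + 1 ∨
        b = 2 * (a / 2) ∧ a = 2 * (a / 2) + 1) with ⟨h1, h2⟩ | ⟨h1, h2⟩
    · exact congrArg₂ (fun p q => s(Z p, Z q)) h1 h2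
    · rw [Sym2.eq_swap]
      exact congrArg₂ (fun p q => s(Z p, Z q)) h1 h2

theorem neighborSet_fromEdgeSet_pairEdges (hZ : Set.InjOn Z (Set.Iio (2 * ℓ))) {n : ℕ}
    (hn : n < 2 * ℓ) :
    (fromEdgeSet (pairEdges Z ℓ)).neighborSet (Z n) = {Z (n + 1 - 2 * (n % 2))} := by
  have hm : n + 1 - 2 * (n % 2) < 2 * ℓ := by omega
  ext w
  simp only [mem_neighborSet, fromEdgeSet_adj, Set.mem_singleton_iff]
  constructor
  · rintro ⟨he, -⟩
    obtain ⟨b, hb, rfl⟩ := exists_eq_of_mem_pairEdges he (Sym2.mem_mk_right _ _)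
    have := (mk_mem_pairEdges_iff hZ hn hb).mp he
    congr 1; omega
  · rintro rfl
    exact ⟨(mk_mem_pairEdges_iff hZ hn hm).mpr (by omega),
      fun h => by have := hZ hn hm h; omega⟩

theorem neighborSet_fromEdgeSet_pairEdges_eq_empty {v : V} (hv : ∀ n < 2 * ℓ, v ≠ Z n) :
    (fromEdgeSet (pairEdges Z ℓ)).neighborSet v = ∅ :=
  Set.eq_empty_of_forall_notMem fun _ ⟨he, _⟩ =>
    have ⟨n, hn, h⟩ := exists_eq_of_mem_pairEdges he (Sym2.mem_mk_left _ _)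
    hv n hn h

/-- `Z` enumerates the vertices of `P` whose `starAB`-partner lies outside `P`. -/
theorem ncard_neighborSet_starEdgesIn_union_pairEdges [Finite V] {J : SimpleGraph V}
    (hJ : PathSystem J) {P : Set V} (hZ : Set.InjOn Z (Set.Iio (2 * ℓ)))
    (hZout : ∀ n < 2 * ℓ, ∃ w ∉ P, (starAB J).Adj (Z n) w)
    (hZof : ∀ v ∈ P, ∀ w ∉ P, (starAB J).Adj v w → ∃ n < 2 * ℓ, v = Z n)
    {v : V} (hv : v ∈ P) (hdeg : degS J v ≤ 1) :
    ((fromEdgeSet (starEdgesIn J P ∪ pairEdges Z ℓ)).neighborSet v).ncard = degS J v := by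
  have hstar : (fromEdgeSet (starEdgesIn J P)).neighborSet v = {w | (starAB J).Adj v w ∧ w ∈ P} :=
    Set.ext fun w => by
      simp only [mem_neighborSet, fromEdgeSet_adj, mk_mem_starEdgesIn, Set.mem_ofPred_eq]
      exact ⟨fun ⟨⟨h, _, hw⟩, _⟩ => ⟨h, hw⟩, fun ⟨h, hw⟩ => ⟨⟨h, hv, hw⟩, h.ne⟩⟩
  rw [fromEdgeSet_union, neighborSet_sup, hstar]
  rcases (by omega : degS J v = 0 ∨ degS J v = 1) with h0 | h1
  · have hnZ : ∀ n < 2 * ℓ, v ≠ Z n := fun n hn h => by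
      obtain ⟨w, -, hw⟩ := hZout n hn
      rw [← h] at hw
      have := hw.2.1
      omega
    rw [neighborSet_fromEdgeSet_pairEdges_eq_empty hnZ, h0, Set.union_empty, Set.ncard_eq_zero]
    refine Set.eq_empty_of_forall_notMem fun w hw => ?_
    have := hw.1.2.1
    omega
  obtain ⟨w₀, hw₀⟩ := hJ.exists_starAB_neighborSet_eq h1
  have hS : ∀ {w}, (starAB J).Adj v w ↔ w = w₀ := fun {w} => by
    rw [← mem_neighborSet, hw₀, Set.mem_singleton_iff]
  by_cases hw₀P : w₀ ∈ P
  · have hnZ : ∀ n < 2 * ℓ, v ≠ Z n := fun n hn h => by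
      obtain ⟨w, hwP, hw⟩ := hZout n hn
      rw [← h, hS] at hw
      exact hwP (hw ▸ hw₀P)
    rw [neighborSet_fromEdgeSet_pairEdges_eq_empty hnZ, Set.union_empty, h1]
    convert Set.ncard_singleton w₀
    ext w
    simp only [Set.mem_ofPred_eq, Set.mem_singleton_iff, hS]
    exact ⟨And.left, fun h => ⟨h, h ▸ hw₀P⟩⟩
  · obtain ⟨n, hn, rfl⟩ := hZof v hv w₀ hw₀P (hS.mpr rfl)
    rw [neighborSet_fromEdgeSet_pairEdges hZ hn, h1]
    have hempty : {w | (starAB J).Adj (Z n) w ∧ w ∈ P} = ∅ :=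
      Set.eq_empty_of_forall_notMem fun w hw => hw₀P (hS.mp hw.1 ▸ hw.2)
    rw [hempty, Set.empty_union, Set.ncard_singleton]

end FictiveEdges

section Enumerations

variable {V : Type*} {H : SimpleGraph V} {N : ℕ} {f : ZMod N → V} {ℓ : ℕ}

theorem exists_eq_of_mem_pairEdges_succ {y : ZMod (2 * ℓ) → V} {e : Sym2 V}
    (he : e ∈ pairEdges (fun n : ℕ => y ((n + 1 : ℕ) : ZMod (2 * ℓ))) ℓ) {v : V} (hv : v ∈ e) :
    ∃ m < 2 * ℓ, v = y m := by
  obtain ⟨n, hn, rfl⟩ := exists_eq_of_mem_pairEdges he hv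
  exact ⟨(n + 1) % (2 * ℓ), Nat.mod_lt _ (by omega), by simp only [ZMod.natCast_mod]⟩

theorem reachable_of_visitsInOrder_pairEdges (hf : Function.Injective f) {x : ZMod (2 * ℓ) → V}
    (hx : Function.Injective x) (hvis : VisitsInOrder f (2 * ℓ) (fun n : ℕ => x n))
    (hH : ∀ i, s(f i, f (i + 1)) ∉ pairEdges (fun n : ℕ => x n) ℓ → H.Reachable (f i) (f (i + 1)))
    {i : ℕ} (hi : 2 * i + 2 < 2 * ℓ) :
    H.Reachable (x ((2 * i + 1 : ℕ) : ZMod (2 * ℓ))) (x ((2 * i + 2 : ℕ) : ZMod (2 * ℓ))) := by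
  have hX : Set.InjOn (fun n : ℕ => x n) (Set.Iio (2 * ℓ)) := by
    simpa using hx.injOn_natCast_add 0
  refine hvis.reachable_succ hf (fun e he v hv => exists_eq_of_mem_pairEdges he hv) hH
    (j := 2 * i + 1) hi ?_
  rw [mk_mem_pairEdges_iff hX (by omega) hi]
  omega

theorem reachable_of_visitsInOrder_shifted_pairEdges (hf : Function.Injective f) (hN : 3 ≤ N)
    (hℓ : 0 < ℓ) {y : ZMod (2 * ℓ) → V} (hy : Function.Injective y)
    (hvis : VisitsInOrder f (2 * ℓ) (fun n : ℕ => y n))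
    (hFC : pairEdges (fun n : ℕ => y ((n + 1 : ℕ) : ZMod (2 * ℓ))) ℓ ⊆ (cycOn f).edgeSet)
    (hH : ∀ i, s(f i, f (i + 1)) ∉ pairEdges (fun n : ℕ => y ((n + 1 : ℕ) : ZMod (2 * ℓ))) ℓ →
      H.Reachable (f i) (f (i + 1)))
    {i : ℕ} (hi : i < ℓ) :
    H.Reachable (y ((2 * i : ℕ) : ZMod (2 * ℓ))) (y ((2 * i + 1 : ℕ) : ZMod (2 * ℓ))) := by
  have hcast : ∀ {a b : ℕ}, a ≤ 2 * ℓ → b ≤ 2 * ℓ → y a = y b →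
      a = b ∨ a = 0 ∧ b = 2 * ℓ ∨ a = 2 * ℓ ∧ b = 0 := fun ha hb h =>
    ZMod.eq_or_of_natCast_eq ha hb (hy h)
  rcases (by omega : ℓ = 1 ∨ 2 ≤ ℓ) with rfl | hℓ2
  · -- The arc from `y 0` to `y 1` may be the fictive edge itself: go round the other way.
    have : NeZero N := ⟨by omega⟩
    obtain rfl : i = 0 := by omega
    have hmem : s(y ((1 : ℕ) : ZMod (2 * 1)), y ((2 : ℕ) : ZMod (2 * 1))) ∈
        pairEdges (fun n : ℕ => y ((n + 1 : ℕ) : ZMod (2 * 1))) 1 := ⟨⟨0, hℓ⟩, rfl⟩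
    obtain ⟨⟨k, hk⟩, -⟩ := cycOn_adj.mp (hFC hmem)
    have hreach := reachable_of_forall_ne_reachable (H := H) k fun j hj => hH j fun ⟨c, hc⟩ => by
      obtain rfl := Subsingleton.elim c ⟨0, hℓ⟩
      exact hj (eq_of_mk_eq_mk_add_one hf hN (hc.trans hk))
    have hy2 : y ((2 : ℕ) : ZMod (2 * 1)) = y ((0 : ℕ) : ZMod (2 * 1)) :=
      congrArg y ((ZMod.natCast_self (2 * 1)).trans Nat.cast_zero.symm)
    simp only [Nat.mul_zero, Nat.zero_add] at hk hy2 ⊢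
    rcases Sym2.eq_iff.mp hk with ⟨h1, h2⟩ | ⟨h1, h2⟩
    · rw [← hy2, h1, h2]; exact hreach
    · rw [← hy2, h1, h2]; exact hreach.symm
  · refine hvis.reachable_succ hf (fun e he v hv => exists_eq_of_mem_pairEdges_succ he hv) hH
      (j := 2 * i) (by omega) ?_
    rintro ⟨⟨c, hc⟩, he⟩
    rcases Sym2.eq_iff.mp he with ⟨h1, -⟩ | ⟨h1, h2⟩
    · have := hcast (by omega) (by omega) h1; omega
    · have := hcast (by omega) (by omega) h1; have := hcast (by omega) (by omega) h2; omega

end Enumerations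

theorem ncard_neighborSet_sdiff_sup {V : Type*} [Finite V] {C C' M M' J : SimpleGraph V}
    (hM : M ≤ C) (hM' : M' ≤ C') {v : V} (hC' : C'.neighborSet v = ∅)
    (hCJ : Disjoint (C.neighborSet v) (J.neighborSet v)) :
    ((((C ⊔ C') \ (M ⊔ M')) ⊔ J).neighborSet v).ncard =
      (C.neighborSet v).ncard - (M.neighborSet v).ncard + (J.neighborSet v).ncard := by
  have hM'v : M'.neighborSet v = ∅ := Set.subset_empty_iff.mp (hC' ▸ fun _ hw => hM' hw)
  simp only [neighborSet_sup, neighborSet_sdiff, hC', hM'v, Set.union_empty]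
  rw [Set.ncard_union_eq (hCJ.mono_left Set.sdiff_subset),
    Set.ncard_sdiff (show M.neighborSet v ⊆ C.neighborSet v from fun _ hw => hM hw)]

section Sides

variable {V : Type*} {N : ℕ} {f : ZMod N → V} {C' M' J : SimpleGraph V}

theorem ncard_neighborSet_eq_two_of_mem_range [Finite V] (hf : Function.Injective f)
    (hN : 3 ≤ N) {M : SimpleGraph V} (hM : M ≤ cycOn f) (hM' : M' ≤ C') {v : V}
    (hv : v ∈ Set.range f) (hC' : C'.neighborSet v = ∅) (hJ : ∀ w, J.Adj v w → w ∉ Set.range f)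
    (hMJ : (M.neighborSet v).ncard = degS J v) (hdeg : degS J v ≤ 1) :
    ((((cycOn f ⊔ C') \ (M ⊔ M')) ⊔ J).neighborSet v).ncard = 2 := by
  obtain ⟨k, rfl⟩ := hv
  rw [ncard_neighborSet_sdiff_sup hM hM' hC' (Set.disjoint_left.mpr fun w hw hwJ =>
    hJ w hwJ (mem_range_of_cycOn_adj hw.symm)), ncard_cycOn_neighborSet hf hN, hMJ]
  exact Nat.sub_add_cancel (by omega)

theorem reachable_of_not_mem_pairEdges (hf : Function.Injective f) (hN : 2 ≤ N) {P : Set V}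
    {Z : ℕ → V} {ℓ : ℕ} (hM' : ∀ u w, M'.Adj u w → u ∉ Set.range f) {i : ZMod N}
    (hi : s(f i, f (i + 1)) ∉ pairEdges Z ℓ) :
    (((cycOn f ⊔ C') \ (fromEdgeSet (starEdgesIn J P ∪ pairEdges Z ℓ) ⊔ M')) ⊔ J).Reachable
      (f i) (f (i + 1)) := by
  refine reachable_sdiff_sup_of_adj (Or.inl (cycOn_adj_add_one hf hN i)) fun h => ?_
  rcases h with h | h
  · rcases ((fromEdgeSet_adj _).mp h).1 with h | h
    · exact (mk_mem_starEdgesIn.mp h).1.2.2.2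
    · exact absurd h hi
  · exact absurd ⟨i, rfl⟩ (hM' _ _ h)

end Sides

section Setting

variable {V : Type*}

/-- `starA J A x` and `starB J B y` are the paper's `J*_A` and `J*_B`. Since `pairEdges` pairs
`2i` with `2i + 1`, the pairs `y_{2i+1} y_{2i+2}` of `J*_B` are those of `n ↦ y_{n+1}`. -/
def starA (J : SimpleGraph V) (A : Set V) {ℓ : ℕ} (x : ZMod (2 * ℓ) → V) : SimpleGraph V :=
  fromEdgeSet (starEdgesIn J A ∪ pairEdges (fun n : ℕ => x n) ℓ)

def starB (J : SimpleGraph V) (B : Set V) {ℓ : ℕ} (y : ZMod (2 * ℓ) → V) : SimpleGraph V :=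
  fromEdgeSet (starEdgesIn J B ∪ pairEdges (fun n : ℕ => y ((n + 1 : ℕ) : ZMod (2 * ℓ))) ℓ)

/-- The setting of the theorem; the partition `V = A ∪ A₀ ∪ B ∪ B₀` enters only through the
degrees of `J`. -/
structure ConsistentCycles (A B : Set V) (J : SimpleGraph V) {ℓ : ℕ} (x y : ZMod (2 * ℓ) → V)
    {NA NB : ℕ} (fA : ZMod NA → V) (fB : ZMod NB → V) : Prop where
  disjoint : Disjoint A B
  pathSystem : PathSystem J
  degS_le_one : ∀ v, v ∈ A ∨ v ∈ B → degS J v ≤ 1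
  degS_eq_two : ∀ v, v ∉ A → v ∉ B → degS J v = 2
  not_adj : ∀ u v, J.Adj u v → ¬(u ∈ A ∧ v ∈ A) ∧ ¬(u ∈ B ∧ v ∈ B)
  pos : 0 < ℓ
  injective_x : Function.Injective x
  injective_y : Function.Injective y
  starAB_adj_iff : ∀ u v, ((starAB J).Adj u v ∧ u ∈ A ∧ v ∈ B) ↔ ∃ i, u = x i ∧ v = y i
  three_le_NA : 3 ≤ NA
  three_le_NB : 3 ≤ NB
  injective_fA : Function.Injective fA
  injective_fB : Function.Injective fB
  range_fA : Set.range fA = A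
  range_fB : Set.range fB = B
  starA_le : starA J A x ≤ cycOn fA
  starB_le : starB J B y ≤ cycOn fB
  visitsInOrder_x : VisitsInOrder fA (2 * ℓ) (fun n : ℕ => x n)
  visitsInOrder_y : VisitsInOrder fB (2 * ℓ) (fun n : ℕ => y n)

namespace ConsistentCycles

variable {A B : Set V} {J : SimpleGraph V} {ℓ : ℕ} {x y : ZMod (2 * ℓ) → V} {NA NB : ℕ}
  {fA : ZMod NA → V} {fB : ZMod NB → V}

theorem degS_le_one_iff (h : ConsistentCycles A B J x y fA fB) {v : V} :
    degS J v ≤ 1 ↔ v ∈ A ∨ v ∈ B := by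
  refine ⟨fun hv => ?_, h.degS_le_one v⟩
  by_contra hAB
  have := h.degS_eq_two v (not_or.mp hAB).1 (not_or.mp hAB).2
  omega

theorem starAB_adj_x_y (h : ConsistentCycles A B J x y fA fB) (i : ZMod (2 * ℓ)) :
    (starAB J).Adj (x i) (y i) ∧ x i ∈ A ∧ y i ∈ B :=
  (h.starAB_adj_iff _ _).mpr ⟨i, rfl, rfl⟩

theorem ncard_neighborSet_starA [Finite V] (h : ConsistentCycles A B J x y fA fB) {v : V}
    (hv : v ∈ A) : ((starA J A x).neighborSet v).ncard = degS J v := by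
  have : NeZero (2 * ℓ) := ⟨by have := h.pos; omega⟩
  refine ncard_neighborSet_starEdgesIn_union_pairEdges h.pathSystem
    (by simpa using h.injective_x.injOn_natCast_add 0)
    (fun n _ => ⟨_, h.disjoint.notMem_of_mem_right (h.starAB_adj_x_y n).2.2,
      (h.starAB_adj_x_y n).1⟩) (fun u hu w hw huw => ?_) hv (h.degS_le_one v (Or.inl hv))
  obtain ⟨i, rfl, -⟩ := (h.starAB_adj_iff u w).mp
    ⟨huw, hu, (h.degS_le_one_iff.mp huw.2.2.1.le).resolve_left hw⟩
  exact ⟨i.val, i.val_lt, by simp⟩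

theorem ncard_neighborSet_starB [Finite V] (h : ConsistentCycles A B J x y fA fB) {v : V}
    (hv : v ∈ B) : ((starB J B y).neighborSet v).ncard = degS J v := by
  have : NeZero (2 * ℓ) := ⟨by have := h.pos; omega⟩
  refine ncard_neighborSet_starEdgesIn_union_pairEdges h.pathSystem
    (h.injective_y.injOn_natCast_add 1)
    (fun n _ => ⟨_, h.disjoint.notMem_of_mem_left (h.starAB_adj_x_y _).2.1,
      (h.starAB_adj_x_y _).1.symm⟩) (fun u hu w hw huw => ?_) hv (h.degS_le_one v (Or.inr hv))
  obtain ⟨i, -, rfl⟩ := (h.starAB_adj_iff w u).mp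
    ⟨huw.symm, (h.degS_le_one_iff.mp huw.2.2.1.le).resolve_right hw, hu⟩
  exact ⟨(i - 1).val, (i - 1).val_lt, by simp⟩

theorem ncard_neighborSet [Finite V] (h : ConsistentCycles A B J x y fA fB) (v : V) :
    ((((cycOn fA ⊔ cycOn fB) \ (starA J A x ⊔ starB J B y)) ⊔ J).neighborSet v).ncard = 2 := by
  by_cases hvA : v ∈ A
  · exact ncard_neighborSet_eq_two_of_mem_range h.injective_fA h.three_le_NA h.starA_le
      h.starB_le (h.range_fA ▸ hvA)
      (cycOn_neighborSet_eq_empty (h.range_fB ▸ h.disjoint.notMem_of_mem_left hvA))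
      (fun w hw hwA => (h.not_adj v w hw).1 ⟨hvA, h.range_fA ▸ hwA⟩)
      (h.ncard_neighborSet_starA hvA) (h.degS_le_one v (Or.inl hvA))
  by_cases hvB : v ∈ B
  · rw [sup_comm (cycOn fA), sup_comm (starA J A x)]
    exact ncard_neighborSet_eq_two_of_mem_range h.injective_fB h.three_le_NB h.starB_le
      h.starA_le (h.range_fB ▸ hvB)
      (cycOn_neighborSet_eq_empty (h.range_fA ▸ h.disjoint.notMem_of_mem_right hvB))
      (fun w hw hwB => (h.not_adj v w hw).2 ⟨hvB, h.range_fB ▸ hwB⟩)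
      (h.ncard_neighborSet_starB hvB) (h.degS_le_one v (Or.inr hvB))
  have hA : (cycOn fA).neighborSet v = ∅ := cycOn_neighborSet_eq_empty (h.range_fA ▸ hvA)
  rw [ncard_neighborSet_sdiff_sup h.starA_le h.starB_le
    (cycOn_neighborSet_eq_empty (h.range_fB ▸ hvB)) (by simp [hA]), hA, Set.ncard_empty,
    Nat.zero_sub, Nat.zero_add]
  exact h.degS_eq_two v hvA hvB

theorem reachable_fA_add_one (h : ConsistentCycles A B J x y fA fB) (i : ZMod NA)
    (hi : s(fA i, fA (i + 1)) ∉ pairEdges (fun n : ℕ => x n) ℓ) :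
    (((cycOn fA ⊔ cycOn fB) \ (starA J A x ⊔ starB J B y)) ⊔ J).Reachable (fA i) (fA (i + 1)) :=
  reachable_of_not_mem_pairEdges h.injective_fA (by have := h.three_le_NA; omega)
    (fun _ _ huw hu => h.disjoint.notMem_of_mem_right
      (h.range_fB ▸ mem_range_of_cycOn_adj (h.starB_le huw)) (h.range_fA ▸ hu)) hi

theorem reachable_fB_add_one (h : ConsistentCycles A B J x y fA fB) (i : ZMod NB)
    (hi : s(fB i, fB (i + 1)) ∉ pairEdges (fun n : ℕ => y ((n + 1 : ℕ) : ZMod (2 * ℓ))) ℓ) :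
    (((cycOn fA ⊔ cycOn fB) \ (starA J A x ⊔ starB J B y)) ⊔ J).Reachable (fB i) (fB (i + 1)) := by
  rw [sup_comm (cycOn fA), sup_comm (starA J A x)]
  exact reachable_of_not_mem_pairEdges h.injective_fB (by have := h.three_le_NB; omega)
    (fun _ _ huw hu => h.disjoint.notMem_of_mem_left
      (h.range_fA ▸ mem_range_of_cycOn_adj (h.starA_le huw)) (h.range_fB ▸ hu)) hi

theorem reachable_x_y (h : ConsistentCycles A B J x y fA fB) (i : ZMod (2 * ℓ)) :
    (((cycOn fA ⊔ cycOn fB) \ (starA J A x ⊔ starB J B y)) ⊔ J).Reachable (x i) (y i) :=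
  (h.starAB_adj_x_y i).1.2.2.2.mono le_sup_right

theorem reachable_y_zero (h : ConsistentCycles A B J x y fA fB) {n : ℕ} (hn : n < 2 * ℓ) :
    (((cycOn fA ⊔ cycOn fB) \ (starA J A x ⊔ starB J B y)) ⊔ J).Reachable
      (y n) (y ((0 : ℕ) : ZMod (2 * ℓ))) := by
  have hFB : pairEdges (fun n : ℕ => y ((n + 1 : ℕ) : ZMod (2 * ℓ))) ℓ ⊆ (cycOn fB).edgeSet := by
    rintro _ ⟨i, rfl⟩
    refine h.starB_le ((fromEdgeSet_adj _).mpr ⟨Or.inr ⟨i, rfl⟩, fun he => ?_⟩)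
    have := i.2
    have := h.injective_y.injOn_natCast_add 1 (Set.mem_Iio.mpr (by omega))
      (Set.mem_Iio.mpr (by omega)) he
    omega
  exact reachable_zigzag (fun n : ℕ => x n) (fun n : ℕ => y n) (fun n _ => h.reachable_x_y n)
    (fun i hi => reachable_of_visitsInOrder_pairEdges h.injective_fA h.injective_x
      h.visitsInOrder_x h.reachable_fA_add_one hi)
    (fun i hi => reachable_of_visitsInOrder_shifted_pairEdges h.injective_fB h.three_le_NB h.pos
      h.injective_y h.visitsInOrder_y hFB h.reachable_fB_add_one hi) hn

theorem exists_reachable_y (h : ConsistentCycles A B J x y fA fB) {v : V} (hv : v ∈ A ∨ v ∈ B) :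
    ∃ n < 2 * ℓ, (((cycOn fA ⊔ cycOn fB) \ (starA J A x ⊔ starB J B y)) ⊔ J).Reachable
      v (y n) := by
  have : NeZero NA := ⟨by have := h.three_le_NA; omega⟩
  have : NeZero NB := ⟨by have := h.three_le_NB; omega⟩
  rcases hv with hv | hv
  · obtain ⟨k, rfl⟩ := h.range_fA ▸ hv
    obtain ⟨n, hn, hreach⟩ := h.visitsInOrder_x.exists_reachable (by have := h.pos; omega)
      (fun e he v hv => exists_eq_of_mem_pairEdges he hv) h.reachable_fA_add_one k
    exact ⟨n, hn, hreach.trans (h.reachable_x_y n)⟩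
  · obtain ⟨k, rfl⟩ := h.range_fB ▸ hv
    exact h.visitsInOrder_y.exists_reachable (by have := h.pos; omega)
      (fun e he v hv => exists_eq_of_mem_pairEdges_succ he hv) h.reachable_fB_add_one k

theorem connected [Finite V] (h : ConsistentCycles A B J x y fA fB) :
    (((cycOn fA ⊔ cycOn fB) \ (starA J A x ⊔ starB J B y)) ⊔ J).Connected := by
  have : Nonempty V := ⟨x 0⟩
  have hreach : ∀ v, (((cycOn fA ⊔ cycOn fB) \ (starA J A x ⊔ starB J B y)) ⊔ J).Reachable
      v (y ((0 : ℕ) : ZMod (2 * ℓ))) := fun v => by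
    obtain ⟨u, hvu, hu⟩ := exists_reachable_degS_le_one h.pathSystem.1 v
    obtain ⟨n, hn, hun⟩ := h.exists_reachable_y (h.degS_le_one_iff.mp hu)
    exact (hvu.mono le_sup_right).trans (hun.trans (h.reachable_y_zero hn))
  exact ⟨fun u v => (hreach u).trans (hreach v).symm⟩

theorem isHamCycleOn [Finite V] (h : ConsistentCycles A B J x y fA fB) :
    IsHamCycleOn (((cycOn fA ⊔ cycOn fB) \ (starA J A x ⊔ starB J B y)) ⊔ J) Set.univ :=
  isHamCycleOn_univ_of_connected h.connected h.ncard_neighborSet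

end ConsistentCycles

end Setting

theorem stmt7_general (V : Type*) [Fintype V] (A A₀ B B₀ : Set V) (J : SimpleGraph V)
    (hpart : A ∪ A₀ ∪ B ∪ B₀ = Set.univ)
    (hd1 : Disjoint A A₀) (hd2 : Disjoint A B) (hd3 : Disjoint A B₀)
    (hd4 : Disjoint A₀ B) (hd6 : Disjoint B B₀)
    (hps : PathSystem J)
    (hEC2a : ∀ v ∈ A₀ ∪ B₀, degS J v = 2)
    (hEC2b : ∀ v, v ∉ A₀ ∪ B₀ → degS J v ≤ 1)
    (hEC3 : ∀ x y, J.Adj x y → ¬(x ∈ A ∧ y ∈ A) ∧ ¬(x ∈ B ∧ y ∈ B))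
    -- enumeration of the `AB`-edges of `J*_{AB}`; there are `2ℓ > 0` of them, so `J` is a
    -- Hamilton exceptional system
    (ℓ : ℕ) (hℓ : 0 < ℓ)
    (x y : ZMod (2 * ℓ) → V)
    (hxinj : Function.Injective x) (hyinj : Function.Injective y)
    (henum : ∀ u v, ((starAB J).Adj u v ∧ u ∈ A ∧ v ∈ B) ↔ ∃ i, u = x i ∧ v = y i)
    -- the fictive edge graphs `J*_A`, `J*_B`
    (JA JB : SimpleGraph V)
    (hJA : JA = SimpleGraph.fromEdgeSet
      ({e | ∃ u v, e = s(u, v) ∧ (starAB J).Adj u v ∧ u ∈ A ∧ v ∈ A} ∪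
       {e | ∃ i : Fin ℓ, e = s(x ((2 * (i : ℕ) : ℕ) : ZMod (2 * ℓ)),
                               x (((2 * (i : ℕ) + 1 : ℕ)) : ZMod (2 * ℓ)))}))
    (hJB : JB = SimpleGraph.fromEdgeSet
      ({e | ∃ u v, e = s(u, v) ∧ (starAB J).Adj u v ∧ u ∈ B ∧ v ∈ B} ∪
       {e | ∃ i : Fin ℓ, e = s(y ((2 * (i : ℕ) + 1 : ℕ) : ZMod (2 * ℓ)),
                               y ((2 * (i : ℕ) + 2 : ℕ) : ZMod (2 * ℓ)))}))
    -- the Hamilton cycles `C_A`, `C_B`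
    (NA NB : ℕ) (fA : ZMod NA → V) (fB : ZMod NB → V)
    (hNA : 3 ≤ NA) (hNB : 3 ≤ NB)
    (hfAinj : Function.Injective fA) (hfBinj : Function.Injective fB)
    (hfA : Set.range fA = A) (hfB : Set.range fB = B)
    -- consistency of `C_A` with `J*_A` and of `C_B` with `J*_B`
    (hconsA : JA ≤ cycOn fA ∧
      VisitsInOrder fA (2 * ℓ) (fun j : ℕ => x ((j : ZMod (2 * ℓ)))))
    (hconsB : JB ≤ cycOn fB ∧
      VisitsInOrder fB (2 * ℓ) (fun j : ℕ => y ((j : ZMod (2 * ℓ))))) :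
    IsHamCycleOn (((cycOn fA ⊔ cycOn fB) \ (JA ⊔ JB)) ⊔ J) Set.univ := by
  obtain rfl : JA = starA J A x := hJA
  obtain rfl : JB = starB J B y := hJB
  refine ConsistentCycles.isHamCycleOn ⟨hd2, hps, fun v hv => hEC2b v ?_, fun v hvA hvB =>
    hEC2a v ?_, hEC3, hℓ, hxinj, hyinj, henum, hNA, hNB, hfAinj, hfBinj, hfA, hfB, hconsA.1,
    hconsB.1, hconsA.2, hconsB.2⟩
  · rintro (h | h) <;> rcases hv with hv | hv
    exacts [hd1.notMem_of_mem_left hv h, hd4.notMem_of_mem_right hv h,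
      hd3.notMem_of_mem_left hv h, hd6.notMem_of_mem_left hv h]
  · have : v ∈ A ∪ A₀ ∪ B ∪ B₀ := hpart ▸ Set.mem_univ v
    simpa [hvA, hvB] using this

/-- Proposition 5.1(i): if `J` is a Hamilton exceptional system, `C_A` is a Hamilton cycle
on `A` consistent with `J*_A` and `C_B` is a Hamilton cycle on `B` consistent with `J*_B`,
then `C_A + C_B - J* + J` is a Hamilton cycle on `V`. -/
theorem stmt7 (V : Type*) [Fintype V] (A A₀ B B₀ : Set V) (J : SimpleGraph V)
    (hpart : A ∪ A₀ ∪ B ∪ B₀ = Set.univ)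
    (hd1 : Disjoint A A₀) (hd2 : Disjoint A B) (hd3 : Disjoint A B₀)
    (hd4 : Disjoint A₀ B) (hd5 : Disjoint A₀ B₀) (hd6 : Disjoint B B₀)
    (hps : PathSystem J)
    (hEC2a : ∀ v ∈ A₀ ∪ B₀, degS J v = 2)
    (hEC2b : ∀ v, v ∉ A₀ ∪ B₀ → degS J v ≤ 1)
    (hEC3 : ∀ x y, J.Adj x y → ¬(x ∈ A ∧ y ∈ A) ∧ ¬(x ∈ B ∧ y ∈ B))
    -- enumeration of the `AB`-edges of `J*_{AB}`; there are `2ℓ > 0` of them, so `J` is a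
    -- Hamilton exceptional system
    (ℓ : ℕ) (hℓ : 0 < ℓ)
    (x y : ZMod (2 * ℓ) → V)
    (hxinj : Function.Injective x) (hyinj : Function.Injective y)
    (hxA : ∀ i, x i ∈ A) (hyB : ∀ i, y i ∈ B)
    (henum : ∀ u v, ((starAB J).Adj u v ∧ u ∈ A ∧ v ∈ B) ↔ ∃ i, u = x i ∧ v = y i)
    -- the fictive edge graphs `J*_A`, `J*_B`
    (JA JB : SimpleGraph V)
    (hJA : JA = SimpleGraph.fromEdgeSet
      ({e | ∃ u v, e = s(u, v) ∧ (starAB J).Adj u v ∧ u ∈ A ∧ v ∈ A} ∪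
       {e | ∃ i : Fin ℓ, e = s(x ((2 * (i : ℕ) : ℕ) : ZMod (2 * ℓ)),
                               x (((2 * (i : ℕ) + 1 : ℕ)) : ZMod (2 * ℓ)))}))
    (hJB : JB = SimpleGraph.fromEdgeSet
      ({e | ∃ u v, e = s(u, v) ∧ (starAB J).Adj u v ∧ u ∈ B ∧ v ∈ B} ∪
       {e | ∃ i : Fin ℓ, e = s(y ((2 * (i : ℕ) + 1 : ℕ) : ZMod (2 * ℓ)),
                               y ((2 * (i : ℕ) + 2 : ℕ) : ZMod (2 * ℓ)))}))
    -- the Hamilton cycles `C_A`, `C_B`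
    (NA NB : ℕ) (fA : ZMod NA → V) (fB : ZMod NB → V)
    (hNA : 3 ≤ NA) (hNB : 3 ≤ NB)
    (hfAinj : Function.Injective fA) (hfBinj : Function.Injective fB)
    (hfA : Set.range fA = A) (hfB : Set.range fB = B)
    -- consistency of `C_A` with `J*_A` and of `C_B` with `J*_B`
    (hconsA : JA ≤ cycOn fA ∧
      VisitsInOrder fA (2 * ℓ) (fun j : ℕ => x ((j : ZMod (2 * ℓ)))))
    (hconsB : JB ≤ cycOn fB ∧
      VisitsInOrder fB (2 * ℓ) (fun j : ℕ => y ((j : ZMod (2 * ℓ))))) :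
    IsHamCycleOn (((cycOn fA ⊔ cycOn fB) \ (JA ⊔ JB)) ⊔ J) Set.univ :=
  stmt7_general V A A₀ B B₀ J hpart hd1 hd2 hd3 hd4 hd6 hps hEC2a hEC2b hEC3 ℓ hℓ x y hxinj hyinj
    henum JA JB hJA hJB NA NB fA fB hNA hNB hfAinj hfBinj hfA hfB hconsA hconsB
end

section
/- Suppose 0 < 1/m ≪ 1/k ≤ ε ≪ ρ, 1/ℓ ≤ 1, ρ ≪ 1, 0 ≤ μ ≤ 1/4, and q ≤ (1−μ−ρ)m. Let (G, Q, C) be a (k, m, μ, ε)-cyclic system with C = V₁…V_k, and let PS₁,…,PS_q be path sequences such that each PS_s is locally balanced with respect to C, |V(PS_s) ∩ V_i| ≤ εm for all i, s, and for each i at most ℓm/k of the PS_s meet V_i. Then there exist directed 1-factors F₁,…,F_q in G + {PS_s} such that PS_s ⊆ F_s for all s and F₁−PS₁,…,F_q−PS_q are pairwise edge-disjoint subgraphs of G. -/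
open Finset

/-- Outdegree of a vertex in a digraph given as a finite set of ordered pairs. -/
def outdegD {V : Type*} [DecidableEq V] (G : Finset (V × V)) (v : V) : ℕ :=
  (G.filter fun e => e.1 = v).card

/-- Indegree of a vertex. -/
def indegD {V : Type*} [DecidableEq V] (G : Finset (V × V)) (v : V) : ℕ :=
  (G.filter fun e => e.2 = v).card

/-- The set of vertices covered by the edges of a digraph. -/
def suppD {V : Type*} [DecidableEq V] (G : Finset (V × V)) : Finset V :=
  G.image Prod.fst ∪ G.image Prod.snd

/-- A path sequence: a union of vertex-disjoint directed paths, i.e. all in- and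
outdegrees are at most one and there is no closed walk. -/
def IsPathSeq {V : Type*} [DecidableEq V] (P : Finset (V × V)) : Prop :=
  (∀ v, outdegD P v ≤ 1 ∧ indegD P v ≤ 1) ∧
  ∀ (n : ℕ) (f : Fin (n + 1) → V),
    ¬((∀ i : Fin n, (f i.castSucc, f i.succ) ∈ P) ∧ (f (Fin.last n), f 0) ∈ P)


/-!
For each edge `V_i V_{i+1}` of `C` and each `s`, we choose a perfect matching from the vertices of
`V_i` that `PS_s` does not leave to the vertices of `V_{i+1}` that `PS_s` does not enter (local
balance makes these two sets equally large), edge-disjointly in `s`; adding these matchings to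
`PS_s` gives `F_s`. The few `s` whose path sequence meets `V_i ∪ V_{i+1}` are matched greedily by
Hall's theorem, since all degrees exceed half the cluster size. What remains of `G[V_i, V_{i+1}]`
is still almost regular, hence satisfies Ore's condition for a `t`-factor, `t` being the number of
the other indices. The `t`-factor comes from Hall's theorem on an auxiliary graph in which every
edge picks a slot at its tail or at its head, and it splits into `t` perfect matchings by
König's theorem.
-/

lemma exists_injOn_of_hall {ι α : Type*} [DecidableEq α] [Nonempty α] (I : Finset ι)
    (t : ι → Finset α) (h : ∀ s ⊆ I, #s ≤ #(s.biUnion t)) :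
    ∃ g : ι → α, Set.InjOn g I ∧ ∀ i ∈ I, g i ∈ t i := by
  classical
  obtain ⟨f, hf, hft⟩ := (all_card_le_biUnion_card_iff_existsInjective' fun i : I => t i).1
    fun s => by
      simpa [image_biUnion, card_image_of_injective _ Subtype.val_injective] using
        h (s.image Subtype.val) fun i hi => by obtain ⟨j, -, rfl⟩ := mem_image.1 hi; exact j.2
  refine ⟨fun i => if hi : i ∈ I then f ⟨i, hi⟩ else Classical.arbitrary α, ?_, ?_⟩
  · intro i hi j hj hij
    simp only [mem_coe] at hi hj
    exact congrArg Subtype.val (hf (show f ⟨i, hi⟩ = f ⟨j, hj⟩ by simpa [hi, hj] using hij))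
  · intro i hi
    simpa [hi] using hft ⟨i, hi⟩

lemma pairwiseDisjoint_update_insert {ι α : Type*} [DecidableEq ι] [DecidableEq α]
    {J : Finset ι} {s₀ : ι} (hs₀ : s₀ ∉ J) {M : ι → Finset α}
    (hM : (J : Set ι).PairwiseDisjoint M) {M₀ : Finset α} (hM₀ : Disjoint M₀ (J.biUnion M)) :
    ((insert s₀ J : Finset ι) : Set ι).PairwiseDisjoint (Function.update M s₀ M₀) := by
  have hupd : ∀ s ∈ J, Function.update M s₀ M₀ s = M s := fun s hs =>
    Function.update_of_ne (ne_of_mem_of_not_mem hs hs₀) _ _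
  rw [coe_insert]
  refine (hM.mono_on fun s hs => (hupd s hs).le).insert fun s hs _ => ?_
  rw [Function.update_self, hupd s hs]
  exact hM₀.mono_right (subset_biUnion_of_mem M hs)

lemma pairwise_disjoint_piecewise {ι α : Type*} [Fintype ι] [DecidableEq ι] [DecidableEq α]
    {I : Finset ι} {f g : ι → Finset α} (hf : (I : Set ι).PairwiseDisjoint f)
    (hg : ((Iᶜ : Finset ι) : Set ι).PairwiseDisjoint g)
    (hfg : ∀ i ∉ I, Disjoint (g i) (I.biUnion f)) :
    Pairwise fun i j => Disjoint (I.piecewise f g i) (I.piecewise f g j) := by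
  intro i j hij
  by_cases hi : i ∈ I <;> by_cases hj : j ∈ I <;> simp only [piecewise_eq_of_mem,
    piecewise_eq_of_notMem, hi, hj, not_false_eq_true]
  · exact hf hi hj hij
  · exact (hfg j hj).symm.mono_left (subset_biUnion_of_mem f hi)
  · exact (hfg i hi).mono_right (subset_biUnion_of_mem f hj)
  · exact hg (by simpa using hi) (by simpa using hj) hij

lemma ore_ineq_of_le {m x y t δ e : ℝ} (hx : 0 ≤ x) (hym : y ≤ m) (htδ : t ≤ δ)
    (hw : m < x + y) (hxδ : x ≤ δ) (h1 : x * δ ≤ e + x * (m - y)) :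
    t * (x + y) ≤ t * m + e := by
  rcases le_total t x with htx | htx
  · nlinarith [mul_nonneg hx (sub_nonneg.2 hxδ),
      mul_nonneg (by linarith : 0 ≤ x + y - m) (sub_nonneg.2 htx)]
  · nlinarith [mul_nonneg hx (sub_nonneg.2 htδ),
      mul_nonneg (by linarith : 0 ≤ m - y) (sub_nonneg.2 htx)]

lemma ore_ineq {m x y t δ Δ e : ℝ} (hx : 0 ≤ x) (hxm : x ≤ m) (hy : 0 ≤ y) (hym : y ≤ m)
    (he : 0 ≤ e) (ht : 0 ≤ t) (htδ : t ≤ δ) (hδΔ : δ ≤ Δ)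
    (h1 : x * δ ≤ e + x * (m - y)) (h2 : y * δ ≤ e + y * (m - x))
    (h3 : x * δ ≤ e + (m - y) * Δ) (hkey : m * (Δ - δ) ≤ (2 * δ - m) * (δ - t)) :
    t * (x + y) ≤ t * m + e := by
  rcases le_or_gt (x + y) m with hw | hw
  · nlinarith
  by_cases hxδ : x ≤ δ
  · exact ore_ineq_of_le hx hym htδ hw hxδ h1
  by_cases hyδ : y ≤ δ
  · linarith [ore_ineq_of_le hy hxm htδ (by linarith) hyδ h2]
  -- both sides exceed `δ`: then `x + y - m ≥ 2δ - m` and near-regularity takes over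
  nlinarith [mul_le_mul_of_nonneg_right (by linarith : 2 * δ - m ≤ x + y - m) (sub_nonneg.2 htδ),
    mul_le_mul_of_nonneg_right hxm (sub_nonneg.2 hδΔ),
    mul_nonneg (by linarith : (0 : ℝ) ≤ x + y - m) (sub_nonneg.2 hδΔ)]

lemma ore_key_of_near_regular {m μ ε β ρ t : ℝ} (hm : 0 ≤ m) (ht : t ≤ (1 - μ - ρ) * m)
    (hμ : μ ≤ 1 / 4) (hε : 0 ≤ ε) (hβ : 0 ≤ β) (hsmall : 2 * ε + β ≤ ρ / 5) (hρ : ρ ≤ 1 / 4) :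
    m * ((1 - μ + ε) * m - (1 - μ - ε - β) * m) ≤
      (2 * ((1 - μ - ε - β) * m) - m) * ((1 - μ - ε - β) * m - t) := by
  have h1 : 2 / 5 * m ≤ 2 * ((1 - μ - ε - β) * m) - m := by nlinarith
  have h2 : 4 / 5 * ρ * m ≤ (1 - μ - ε - β) * m - t := by nlinarith
  have hρ₀ : 0 ≤ ρ := by linarith
  nlinarith [mul_le_mul h1 h2 (by positivity) (by linarith),
    mul_le_mul_of_nonneg_right hsmall (mul_nonneg hm hm), mul_nonneg hρ₀ (mul_nonneg hm hm)]

section Digraphs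

variable {V : Type*} [DecidableEq V]

lemma card_filter_le_card_filter_sdiff_add (G U : Finset (V × V)) (p : V × V → Prop)
    [DecidablePred p] : #(G.filter p) ≤ #((G \ U).filter p) + #(U.filter p) := by
  rw [← card_union_of_disjoint (disjoint_filter_filter sdiff_disjoint), ← filter_union,
    sdiff_union_self_eq_union]
  exact card_le_card (filter_subset_filter _ subset_union_left)

lemma card_filter_sdiff {G U : Finset (V × V)} (hUG : U ⊆ G) (p : V × V → Prop)
    [DecidablePred p] : #((G \ U).filter p) = #(G.filter p) - #(U.filter p) := by
  rw [← card_sdiff_of_subset (filter_subset_filter _ hUG)]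
  congr 1
  ext e
  simp only [mem_filter, mem_sdiff]
  tauto

lemma outdegD_le_outdegD_sdiff_add (G U : Finset (V × V)) (v : V) :
    outdegD G v ≤ outdegD (G \ U) v + outdegD U v :=
  card_filter_le_card_filter_sdiff_add G U _

lemma indegD_le_indegD_sdiff_add (G U : Finset (V × V)) (v : V) :
    indegD G v ≤ indegD (G \ U) v + indegD U v :=
  card_filter_le_card_filter_sdiff_add G U _

lemma outdegD_sdiff {G U : Finset (V × V)} (hUG : U ⊆ G) (v : V) :
    outdegD (G \ U) v = outdegD G v - outdegD U v :=
  card_filter_sdiff hUG _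

lemma indegD_sdiff {G U : Finset (V × V)} (hUG : U ⊆ G) (v : V) :
    indegD (G \ U) v = indegD G v - indegD U v :=
  card_filter_sdiff hUG _

lemma outdegD_mono {G G' : Finset (V × V)} (h : G ⊆ G') (v : V) : outdegD G v ≤ outdegD G' v :=
  card_le_card (filter_subset_filter _ h)

lemma indegD_mono {G G' : Finset (V × V)} (h : G ⊆ G') (v : V) : indegD G v ≤ indegD G' v :=
  card_le_card (filter_subset_filter _ h)

lemma outdegD_le_card {G : Finset (V × V)} {a : V} {Y : Finset V}
    (h : ∀ e ∈ G, e.1 = a → e.2 ∈ Y) : outdegD G a ≤ #Y :=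
  card_le_card_of_injOn Prod.snd (fun e he => h e (mem_filter.1 he).1 (mem_filter.1 he).2)
    fun _ he _ he' hee' => Prod.ext ((mem_filter.1 he).2.trans (mem_filter.1 he').2.symm) hee'

lemma indegD_le_card {G : Finset (V × V)} {b : V} {X : Finset V}
    (h : ∀ e ∈ G, e.2 = b → e.1 ∈ X) : indegD G b ≤ #X :=
  card_le_card_of_injOn Prod.fst (fun e he => h e (mem_filter.1 he).1 (mem_filter.1 he).2)
    fun _ he _ he' hee' => Prod.ext hee' ((mem_filter.1 he).2.trans (mem_filter.1 he').2.symm)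

lemma sum_outdegD (G : Finset (V × V)) (S : Finset V) :
    ∑ a ∈ S, outdegD G a = #(G.filter (·.1 ∈ S)) :=
  sum_card_fiberwise_eq_card_filter G S Prod.fst

lemma sum_indegD (G : Finset (V × V)) (T : Finset V) :
    ∑ b ∈ T, indegD G b = #(G.filter (·.2 ∈ T)) :=
  sum_card_fiberwise_eq_card_filter G T Prod.snd

lemma card_filter_outdegD_ne_zero {P : Finset (V × V)} (hP : ∀ v, outdegD P v ≤ 1)
    (X : Finset V) : #(X.filter (outdegD P · ≠ 0)) = #(P.filter (·.1 ∈ X)) := by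
  rw [← sum_outdegD, card_filter]
  exact sum_congr rfl fun v _ => by have := hP v; split_ifs <;> omega

lemma card_filter_indegD_ne_zero {P : Finset (V × V)} (hP : ∀ v, indegD P v ≤ 1)
    (X : Finset V) : #(X.filter (indegD P · ≠ 0)) = #(P.filter (·.2 ∈ X)) := by
  rw [← sum_indegD, card_filter]
  exact sum_congr rfl fun v _ => by have := hP v; split_ifs <;> omega

lemma card_filter_outdegD_eq_zero_eq {P : Finset (V × V)}
    (hP : ∀ v, outdegD P v ≤ 1 ∧ indegD P v ≤ 1) {A B : Finset V} (hAB : #A = #B)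
    (hbal : #(P.filter (·.1 ∈ A)) = #(P.filter (·.2 ∈ B))) :
    #(A.filter (outdegD P · = 0)) = #(B.filter (indegD P · = 0)) := by
  have h1 := card_filter_outdegD_ne_zero (fun v => (hP v).1) A
  have h2 := card_filter_indegD_ne_zero (fun v => (hP v).2) B
  have h3 := card_filter_add_card_filter_not (s := A) (outdegD P · = 0)
  have h4 := card_filter_add_card_filter_not (s := B) (indegD P · = 0)
  simp only [ne_eq] at h1 h2
  omega

lemma sdiff_filter_outdegD_eq_zero_subset (P : Finset (V × V)) (X : Finset V) :
    X \ X.filter (outdegD P · = 0) ⊆ suppD P ∩ X := fun v hv => by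
  obtain ⟨hvX, hv⟩ := mem_sdiff.1 hv
  obtain ⟨e, he⟩ := card_ne_zero.1 fun h => hv (mem_filter.2 ⟨hvX, h⟩)
  exact mem_inter.2 ⟨mem_union_left _ (mem_image.2 ⟨e, (mem_filter.1 he).1,
    (mem_filter.1 he).2⟩), hvX⟩

lemma sdiff_filter_indegD_eq_zero_subset (P : Finset (V × V)) (X : Finset V) :
    X \ X.filter (indegD P · = 0) ⊆ suppD P ∩ X := fun v hv => by
  obtain ⟨hvX, hv⟩ := mem_sdiff.1 hv
  obtain ⟨e, he⟩ := card_ne_zero.1 fun h => hv (mem_filter.2 ⟨hvX, h⟩)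
  exact mem_inter.2 ⟨mem_union_right _ (mem_image.2 ⟨e, (mem_filter.1 he).1,
    (mem_filter.1 he).2⟩), hvX⟩

lemma filter_outdegD_eq_zero_eq_self {P : Finset (V × V)} {X : Finset V}
    (h : suppD P ∩ X = ∅) : X.filter (outdegD P · = 0) = X :=
  filter_true_of_mem fun v hv => by_contra fun h' => by
    simpa [h] using sdiff_filter_outdegD_eq_zero_subset P X
      (mem_sdiff.2 ⟨hv, fun hv' => h' (mem_filter.1 hv').2⟩)

lemma filter_indegD_eq_zero_eq_self {P : Finset (V × V)} {X : Finset V}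
    (h : suppD P ∩ X = ∅) : X.filter (indegD P · = 0) = X :=
  filter_true_of_mem fun v hv => by_contra fun h' => by
    simpa [h] using sdiff_filter_indegD_eq_zero_subset P X
      (mem_sdiff.2 ⟨hv, fun hv' => h' (mem_filter.1 hv').2⟩)

end Digraphs

section PerfectMatchings

variable {V : Type*} [DecidableEq V]

def IsPerfectMatchingD (M : Finset (V × V)) (A B : Finset V) : Prop :=
  (∀ v, outdegD M v = if v ∈ A then 1 else 0) ∧ ∀ v, indegD M v = if v ∈ B then 1 else 0

namespace IsPerfectMatchingD

variable {M : Finset (V × V)} {A B : Finset V}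

lemma outdegD_le_one (hM : IsPerfectMatchingD M A B) (v : V) : outdegD M v ≤ 1 := by
  rw [hM.1 v]; split_ifs <;> simp

lemma indegD_le_one (hM : IsPerfectMatchingD M A B) (v : V) : indegD M v ≤ 1 := by
  rw [hM.2 v]; split_ifs <;> simp

end IsPerfectMatchingD

lemma outdegD_le_outdegD_sdiff_biUnion_add {ι : Type*} [DecidableEq ι] (G : Finset (V × V))
    {J : Finset ι} {M : ι → Finset (V × V)} {As Bs : ι → Finset V}
    (hM : ∀ j ∈ J, IsPerfectMatchingD (M j) (As j) (Bs j)) (v : V) :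
    outdegD G v ≤ outdegD (G \ J.biUnion M) v + #J := by
  refine (outdegD_le_outdegD_sdiff_add G _ v).trans (Nat.add_le_add_left ?_ _)
  rw [outdegD, filter_biUnion]
  exact card_biUnion_le.trans
    ((sum_le_card_nsmul _ _ 1 fun j hj => (hM j hj).outdegD_le_one v).trans (by simp))

lemma indegD_le_indegD_sdiff_biUnion_add {ι : Type*} [DecidableEq ι] (G : Finset (V × V))
    {J : Finset ι} {M : ι → Finset (V × V)} {As Bs : ι → Finset V}
    (hM : ∀ j ∈ J, IsPerfectMatchingD (M j) (As j) (Bs j)) (v : V) :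
    indegD G v ≤ indegD (G \ J.biUnion M) v + #J := by
  refine (indegD_le_indegD_sdiff_add G _ v).trans (Nat.add_le_add_left ?_ _)
  rw [indegD, filter_biUnion]
  exact card_biUnion_le.trans
    ((sum_le_card_nsmul _ _ 1 fun j hj => (hM j hj).indegD_le_one v).trans (by simp))

-- Stated for a projection `f`: `Prod.fst` gives outdegrees, `Prod.snd` indegrees.
lemma card_filter_biUnion_eq_ite {ι : Type*} [DecidableEq ι] {I : Finset ι}
    {M : ι → Finset (V × V)} {X : ι → Finset V} (f : V × V → V)
    (hX : (I : Set ι).PairwiseDisjoint X)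
    (hM : ∀ i ∈ I, ∀ v, #((M i).filter (f · = v)) = if v ∈ X i then 1 else 0) (v : V) :
    #((I.biUnion M).filter (f · = v)) = if v ∈ I.biUnion X then 1 else 0 := by
  have hempty : ∀ i ∈ I, v ∉ X i → (M i).filter (f · = v) = ∅ := fun i hi hv =>
    card_eq_zero.1 ((hM i hi v).trans (if_neg hv))
  rw [filter_biUnion, card_biUnion fun i hi j hj hij => ?_]
  · rw [sum_congr rfl fun i hi => hM i hi v, sum_boole, Nat.cast_id]
    have hle : #(I.filter (v ∈ X ·)) ≤ 1 := card_le_one.2 fun i hi j hj => by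
      by_contra hij
      exact disjoint_left.1 (hX (mem_filter.1 hi).1 (mem_filter.1 hj).1 hij)
        (mem_filter.1 hi).2 (mem_filter.1 hj).2
    have hpos : 0 < #(I.filter (v ∈ X ·)) ↔ v ∈ I.biUnion X := by
      simp [card_pos, Finset.Nonempty, mem_biUnion]
    split_ifs with hv
    · have := hpos.2 hv
      omega
    · have := mt hpos.1 hv
      omega
  · show Disjoint ((M i).filter (f · = v)) ((M j).filter (f · = v))
    by_cases hvi : v ∈ X i
    · rw [hempty j hj (disjoint_left.1 (hX hi hj hij) hvi)]
      exact disjoint_empty_right _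
    · rw [hempty i hi hvi]
      exact disjoint_empty_left _

lemma IsPerfectMatchingD.biUnion {ι : Type*} [DecidableEq ι] {I : Finset ι}
    {M : ι → Finset (V × V)} {A B : ι → Finset V} (hA : (I : Set ι).PairwiseDisjoint A)
    (hB : (I : Set ι).PairwiseDisjoint B) (hM : ∀ i ∈ I, IsPerfectMatchingD (M i) (A i) (B i)) :
    IsPerfectMatchingD (I.biUnion M) (I.biUnion A) (I.biUnion B) :=
  ⟨card_filter_biUnion_eq_ite Prod.fst hA fun i hi => (hM i hi).1,
    card_filter_biUnion_eq_ite Prod.snd hB fun i hi => (hM i hi).2⟩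

lemma card_filter_union_eq_one {P M : Finset (V × V)} (f : V × V → V)
    (hP : ∀ v, #(P.filter (f · = v)) ≤ 1)
    (hM : ∀ v, #(M.filter (f · = v)) = if #(P.filter (f · = v)) = 0 then 1 else 0) (v : V) :
    #((P ∪ M).filter (f · = v)) = 1 := by
  have hdisj : Disjoint P M := disjoint_left.2 fun e heP heM => by
    have h1 : 0 < #(M.filter (f · = f e)) := card_pos.2 ⟨e, mem_filter.2 ⟨heM, rfl⟩⟩
    have h2 : 0 < #(P.filter (f · = f e)) := card_pos.2 ⟨e, mem_filter.2 ⟨heP, rfl⟩⟩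
    rw [hM, if_neg h2.ne'] at h1
    exact h1.false
  rw [filter_union, card_union_of_disjoint (disjoint_filter_filter hdisj), hM v]
  have := hP v
  split_ifs <;> omega

lemma IsPerfectMatchingD.oneFactor_union {P M : Finset (V × V)} {A B : Finset V}
    (hM : IsPerfectMatchingD M A B) (hP : ∀ v, outdegD P v ≤ 1 ∧ indegD P v ≤ 1)
    (hA : ∀ v, v ∈ A ↔ outdegD P v = 0) (hB : ∀ v, v ∈ B ↔ indegD P v = 0) (v : V) :
    outdegD (P ∪ M) v = 1 ∧ indegD (P ∪ M) v = 1 :=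
  ⟨card_filter_union_eq_one Prod.fst (fun v => (hP v).1)
      (fun v => (hM.1 v).trans (if_congr (hA v) rfl rfl)) v,
    card_filter_union_eq_one Prod.snd (fun v => (hP v).2)
      (fun v => (hM.2 v).trans (if_congr (hB v) rfl rfl)) v⟩

lemma isPerfectMatchingD_graph {A B : Finset V} {g : V → V} (hg : Set.InjOn g A)
    (hgB : ∀ a ∈ A, g a ∈ B) (hAB : #A = #B) :
    IsPerfectMatchingD (A.image fun a => (a, g a)) A B := by
  have hinj : Function.Injective fun a => (a, g a) := fun a a' h => congrArg Prod.fst h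
  have himage : A.image g = B :=
    eq_of_subset_of_card_le (image_subset_iff.2 hgB) (hAB ▸ (card_image_of_injOn hg).ge)
  constructor <;> intro v <;>
    simp only [outdegD, indegD, filter_image, card_image_of_injective _ hinj]
  · rw [filter_eq']; split_ifs <;> simp
  · split_ifs with hv
    · rw [← himage] at hv
      obtain ⟨a, ha, rfl⟩ := mem_image.1 hv
      rw [card_eq_one]
      exact ⟨a, eq_singleton_iff_unique_mem.2 ⟨mem_filter.2 ⟨ha, rfl⟩,
        fun a' ha' => hg (mem_filter.1 ha').1 ha (mem_filter.1 ha').2⟩⟩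
    · exact card_eq_zero.2 (filter_eq_empty_iff.2 fun a ha hav => hv (hav ▸ hgB a ha))

lemma exists_perfectMatchingD_of_hall {H : Finset (V × V)} {A B : Finset V}
    (hH : H ⊆ A ×ˢ B) (hAB : #A = #B)
    (hall : ∀ S ⊆ A, #S ≤ #((H.filter (·.1 ∈ S)).image Prod.snd)) :
    ∃ M ⊆ H, IsPerfectMatchingD M A B := by
  rcases isEmpty_or_nonempty V with hV | hV
  · exact ⟨∅, empty_subset _, by simp [IsPerfectMatchingD]⟩
  have hbiUnion : ∀ S : Finset V, S.biUnion (fun a => (H.filter (·.1 = a)).image Prod.snd) =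
      (H.filter (·.1 ∈ S)).image Prod.snd := fun S => by
    ext b; simp [mem_biUnion, and_comm]
  obtain ⟨g, hg, hgH⟩ := exists_injOn_of_hall A (fun a => (H.filter (·.1 = a)).image Prod.snd)
    fun S hS => hbiUnion S ▸ hall S hS
  have hedge : ∀ a ∈ A, (a, g a) ∈ H := fun a ha => by
    obtain ⟨e, he, hge⟩ := mem_image.1 (hgH a ha)
    obtain ⟨heH, rfl⟩ := mem_filter.1 he
    exact hge ▸ heH
  exact ⟨_, image_subset_iff.2 hedge, isPerfectMatchingD_graph hg
    (fun a ha => (mem_product.1 (hH (hedge a ha))).2) hAB⟩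

end PerfectMatchings

section Bipartite

variable {V : Type*} [DecidableEq V] {H : Finset (V × V)} {A B : Finset V}

lemma card_filter_fst_mem_eq_add (hH : H ⊆ A ×ˢ B) (S T : Finset V) :
    #(H.filter (·.1 ∈ S)) = #(H ∩ S ×ˢ T) + #(H ∩ S ×ˢ (B \ T)) := by
  rw [← card_union_of_disjoint (disjoint_left.2 fun e he he' => by simp_all [mem_product])]
  congr 1
  ext e
  have := @hH e
  simp only [mem_product, mem_filter, mem_union, mem_inter, mem_sdiff] at *
  tauto

lemma card_filter_snd_mem_eq_add (hH : H ⊆ A ×ˢ B) (S T : Finset V) :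
    #(H.filter (·.2 ∈ T)) = #(H ∩ S ×ˢ T) + #(H ∩ (A \ S) ×ˢ T) := by
  rw [← card_union_of_disjoint (disjoint_left.2 fun e he he' => by simp_all [mem_product])]
  congr 1
  ext e
  have := @hH e
  simp only [mem_product, mem_filter, mem_union, mem_inter, mem_sdiff] at *
  tauto

lemma outdegD_le_outdegD_inter_add (hH : H ⊆ A ×ˢ B) {X Y : Finset V} {a : V} (ha : a ∈ X) :
    outdegD H a ≤ outdegD (H ∩ X ×ˢ Y) a + #(B \ Y) := by
  have := outdegD_le_outdegD_sdiff_add H (H ∩ X ×ˢ Y) a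
  have : outdegD (H \ (H ∩ X ×ˢ Y)) a ≤ #(B \ Y) := outdegD_le_card fun e he hea => by
    obtain ⟨heH, he⟩ := mem_sdiff.1 he
    exact mem_sdiff.2 ⟨(mem_product.1 (hH heH)).2,
      fun heY => he (mem_inter.2 ⟨heH, mem_product.2 ⟨hea ▸ ha, heY⟩⟩)⟩
  omega

lemma indegD_le_indegD_inter_add (hH : H ⊆ A ×ˢ B) {X Y : Finset V} {b : V} (hb : b ∈ Y) :
    indegD H b ≤ indegD (H ∩ X ×ˢ Y) b + #(A \ X) := by
  have := indegD_le_indegD_sdiff_add H (H ∩ X ×ˢ Y) b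
  have : indegD (H \ (H ∩ X ×ˢ Y)) b ≤ #(A \ X) := indegD_le_card fun e he heb => by
    obtain ⟨heH, he⟩ := mem_sdiff.1 he
    exact mem_sdiff.2 ⟨(mem_product.1 (hH heH)).1,
      fun heX => he (mem_inter.2 ⟨heH, mem_product.2 ⟨heX, heb ▸ hb⟩⟩)⟩
  omega

lemma exists_perfectMatchingD_of_minDegree (hH : H ⊆ A ×ˢ B) (hAB : #A = #B) {d : ℝ}
    (hd : (#A : ℝ) ≤ 2 * d) (hout : ∀ a ∈ A, d ≤ outdegD H a)
    (hin : ∀ b ∈ B, d ≤ indegD H b) :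
    ∃ M ⊆ H, IsPerfectMatchingD M A B := by
  refine exists_perfectMatchingD_of_hall hH hAB fun S hS => ?_
  set N := (H.filter (·.1 ∈ S)).image Prod.snd
  obtain rfl | ⟨a, ha⟩ := S.eq_empty_or_nonempty
  · simp
  by_cases hSd : (#S : ℝ) ≤ d
  · have : outdegD H a ≤ #N := outdegD_le_card fun e he hea =>
      mem_image.2 ⟨e, mem_filter.2 ⟨he, hea ▸ ha⟩, rfl⟩
    have : (#S : ℝ) ≤ #N := hSd.trans ((hout a (hS ha)).trans (by exact_mod_cast this))
    exact_mod_cast this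
  -- fewer than `d` vertices lie outside `S`, so every `b ∈ B` has an in-neighbour in `S`
  have hBN : B ⊆ N := by
    intro b hb
    by_contra hbN
    have hdeg : indegD H b ≤ #(A \ S) := indegD_le_card fun e he heb =>
      mem_sdiff.2 ⟨(mem_product.1 (hH he)).1,
        fun heS => hbN (mem_image.2 ⟨e, mem_filter.2 ⟨he, heS⟩, heb⟩)⟩
    rw [card_sdiff_of_subset hS] at hdeg
    have : (indegD H b : ℝ) ≤ #A - #S := by
      rw [← Nat.cast_sub (card_le_card hS)]; exact_mod_cast hdeg
    linarith [hin b hb]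
  calc #S ≤ #A := card_le_card hS
    _ = #B := hAB
    _ ≤ #N := card_le_card hBN

lemma exists_disjoint_perfectMatchingsD_of_minDegree {ι : Type*} [DecidableEq ι]
    (As Bs : ι → Finset V) (d : ℝ) (J : Finset ι)
    (hcard : ∀ s ∈ J, #(As s) = #(Bs s)) (hd : ∀ s ∈ J, (#(As s) : ℝ) + 2 * #J ≤ 2 * d)
    (hout : ∀ s ∈ J, ∀ a ∈ As s, d ≤ outdegD (H ∩ As s ×ˢ Bs s) a)
    (hin : ∀ s ∈ J, ∀ b ∈ Bs s, d ≤ indegD (H ∩ As s ×ˢ Bs s) b) :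
    ∃ M : ι → Finset (V × V), (∀ s ∈ J, M s ⊆ H ∧ IsPerfectMatchingD (M s) (As s) (Bs s)) ∧
      (J : Set ι).PairwiseDisjoint M := by
  induction J using Finset.induction_on with
  | empty => exact ⟨fun _ => ∅, by simp, by simp⟩
  | @insert s₀ J hs₀ ih =>
    simp only [forall_mem_insert, card_insert_of_notMem hs₀, Nat.cast_add, Nat.cast_one]
      at hcard hd hout hin
    obtain ⟨M, hM, hMdisj⟩ := ih hcard.2 (fun s hs => by linarith [hd.2 s hs]) hout.2 hin.2
    have hM' : ∀ s ∈ J, IsPerfectMatchingD (M s) (As s) (Bs s) := fun s hs => (hM s hs).2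
    obtain ⟨M₀, hM₀, hM₀pm⟩ := exists_perfectMatchingD_of_minDegree
      (H := (H ∩ As s₀ ×ˢ Bs s₀) \ J.biUnion M) (sdiff_subset.trans inter_subset_right)
      hcard.1 (d := d - #J) (by linarith [hd.1])
      (fun a ha => by
        have h := outdegD_le_outdegD_sdiff_biUnion_add (H ∩ As s₀ ×ˢ Bs s₀) hM' a
        rify at h
        linarith [hout.1 a ha])
      (fun b hb => by
        have h := indegD_le_indegD_sdiff_biUnion_add (H ∩ As s₀ ×ˢ Bs s₀) hM' b
        rify at h
        linarith [hin.1 b hb])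
    refine ⟨Function.update M s₀ M₀, fun s hs => ?_, pairwiseDisjoint_update_insert hs₀ hMdisj
      (disjoint_of_subset_left hM₀ sdiff_disjoint)⟩
    rcases mem_insert.1 hs with rfl | hs
    · rw [Function.update_self]
      exact ⟨hM₀.trans (sdiff_subset.trans inter_subset_left), hM₀pm⟩
    · rw [Function.update_of_ne (ne_of_mem_of_not_mem hs hs₀)]
      exact hM s hs

lemma exists_disjoint_perfectMatchingsD_of_regular {ι : Type*} [DecidableEq ι]
    (hAB : #A = #B) (J : Finset ι) :
    ∀ K : Finset (V × V), K ⊆ A ×ˢ B → (∀ a ∈ A, outdegD K a = #J) →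
      (∀ b ∈ B, indegD K b = #J) →
      ∃ N : ι → Finset (V × V), (∀ j ∈ J, N j ⊆ K ∧ IsPerfectMatchingD (N j) A B) ∧
        (J : Set ι).PairwiseDisjoint N := by
  induction J using Finset.induction_on with
  | empty => exact fun _ _ _ _ => ⟨fun _ => ∅, by simp, by simp⟩
  | @insert j₀ J hj₀ ih =>
    intro K hK hout hin
    rw [card_insert_of_notMem hj₀] at hout hin
    obtain ⟨M₀, hM₀K, hM₀⟩ := exists_perfectMatchingD_of_hall hK hAB fun S hS => by
      set N := (K.filter (·.1 ∈ S)).image Prod.snd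
      have hNB : N ⊆ B := fun b hb => by
        obtain ⟨e, he, rfl⟩ := mem_image.1 hb
        exact (mem_product.1 (hK (mem_filter.1 he).1)).2
      refine Nat.le_of_mul_le_mul_left ?_ (Nat.succ_pos #J)
      calc (#J + 1) * #S = #(K.filter (·.1 ∈ S)) := by
            rw [← sum_outdegD, sum_const_nat fun a ha => hout a (hS ha), mul_comm]
        _ ≤ #(K.filter (·.2 ∈ N)) := card_le_card fun e he =>
            mem_filter.2 ⟨(mem_filter.1 he).1, mem_image_of_mem _ he⟩
        _ = (#J + 1) * #N := by
            rw [← sum_indegD, sum_const_nat fun b hb => hin b (hNB hb), mul_comm]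
    obtain ⟨N, hN, hNdisj⟩ := ih (K \ M₀) (sdiff_subset.trans hK)
      (fun a ha => by rw [outdegD_sdiff hM₀K, hout a ha, hM₀.1 a, if_pos ha, Nat.add_sub_cancel])
      (fun b hb => by rw [indegD_sdiff hM₀K, hin b hb, hM₀.2 b, if_pos hb, Nat.add_sub_cancel])
    refine ⟨Function.update N j₀ M₀, fun j hj => ?_, pairwiseDisjoint_update_insert hj₀ hNdisj
      (disjoint_left.2 fun e he heN => ?_)⟩
    · rcases mem_insert.1 hj with rfl | hj
      · rw [Function.update_self]
        exact ⟨hM₀K, hM₀⟩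
      · rw [Function.update_of_ne (ne_of_mem_of_not_mem hj hj₀)]
        exact ⟨(hN j hj).1.trans sdiff_subset, (hN j hj).2⟩
    · obtain ⟨j, hj, hej⟩ := mem_biUnion.1 heN
      exact (mem_sdiff.1 ((hN j hj).1 hej)).2 he

end Bipartite

section EdgeSlots

variable {V : Type*}

-- With `c b = indegD H b - t`, an injective choice of slots for the edges of `H` keeps exactly
-- the edges that got a tail slot, and these form a `t`-factor (`regular_filter_isLeft`).
def edgeSlots (t : ℕ) (c : V → ℕ) (S T : Finset V) : Finset ((Σ _ : V, ℕ) ⊕ (Σ _ : V, ℕ)) :=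
  (S.sigma fun _ => range t).disjSum (T.sigma fun b => range (c b))

lemma card_edgeSlots (t : ℕ) (c : V → ℕ) (S T : Finset V) :
    #(edgeSlots t c S T) = t * #S + ∑ b ∈ T, c b := by
  simp [edgeSlots, card_disjSum, card_sigma, mul_comm]

end EdgeSlots

section Factors

variable {V : Type*} [DecidableEq V] {H : Finset (V × V)} {A B : Finset V}

lemma edgeSlots_image_subset_biUnion (t : ℕ) (c : V → ℕ) (X : Finset (V × V)) :
    edgeSlots t c (X.image Prod.fst) (X.image Prod.snd) ⊆
      X.biUnion fun e => edgeSlots t c {e.1} {e.2} := fun x hx => by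
  simp only [edgeSlots, mem_disjSum, mem_sigma, mem_biUnion, mem_singleton, mem_image] at hx ⊢
  rcases hx with ⟨⟨a, j⟩, ⟨⟨e, he, rfl⟩, hj⟩, rfl⟩ | ⟨⟨b, j⟩, ⟨⟨e, he, rfl⟩, hj⟩, rfl⟩
  · exact ⟨e, he, Or.inl ⟨⟨e.1, j⟩, ⟨rfl, hj⟩, rfl⟩⟩
  · exact ⟨e, he, Or.inr ⟨⟨e.2, j⟩, ⟨rfl, hj⟩, rfl⟩⟩

section SlotAssignment

variable {t : ℕ} {c : V → ℕ} {g : V × V → (Σ _ : V, ℕ) ⊕ (Σ _ : V, ℕ)}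

lemma outdegD_filter_isLeft_le (hg : Set.InjOn g H)
    (hgH : ∀ e ∈ H, g e ∈ edgeSlots t c {e.1} {e.2}) (a : V) :
    outdegD (H.filter fun e => (g e).isLeft) a ≤ t := by
  have := card_le_card_of_injOn g (s := (H.filter fun e => (g e).isLeft).filter (·.1 = a))
    (t := edgeSlots t c {a} ∅)
    (fun e he => by
      obtain ⟨heK, rfl⟩ := mem_filter.1 he
      obtain ⟨heH, hleft⟩ := mem_filter.1 heK
      have := hgH e heH
      rcases hge : g e with ⟨x, j⟩ | ⟨x, j⟩
      · rw [hge] at this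
        simpa [edgeSlots] using this
      · simp [hge] at hleft)
    (hg.mono fun e he => (mem_filter.1 (mem_filter.1 he).1).1)
  show #((H.filter fun e => (g e).isLeft).filter (·.1 = a)) ≤ t
  simpa [card_edgeSlots] using this

lemma indegD_filter_not_isLeft_le (hg : Set.InjOn g H)
    (hgH : ∀ e ∈ H, g e ∈ edgeSlots t c {e.1} {e.2}) (b : V) :
    indegD (H.filter fun e => ¬(g e).isLeft) b ≤ c b := by
  have := card_le_card_of_injOn g (s := (H.filter fun e => ¬(g e).isLeft).filter (·.2 = b))
    (t := edgeSlots t c ∅ {b})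
    (fun e he => by
      obtain ⟨heK, rfl⟩ := mem_filter.1 he
      obtain ⟨heH, hright⟩ := mem_filter.1 heK
      have := hgH e heH
      rcases hge : g e with ⟨x, j⟩ | ⟨x, j⟩
      · simp [hge] at hright
      · rw [hge] at this
        simpa [edgeSlots] using this)
    (hg.mono fun e he => (mem_filter.1 (mem_filter.1 he).1).1)
  show #((H.filter fun e => ¬(g e).isLeft).filter (·.2 = b)) ≤ c b
  simpa [card_edgeSlots] using this

lemma regular_filter_isLeft (hH : H ⊆ A ×ˢ B) (hAB : #A = #B) (htin : ∀ b ∈ B, t ≤ indegD H b)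
    (hg : Set.InjOn g H) (hgH : ∀ e ∈ H, g e ∈ edgeSlots t (indegD H · - t) {e.1} {e.2}) :
    (∀ a ∈ A, outdegD (H.filter fun e => (g e).isLeft) a = t) ∧
      ∀ b ∈ B, indegD (H.filter fun e => (g e).isLeft) b = t := by
  have hsumK : ∑ a ∈ A, outdegD (H.filter fun e => (g e).isLeft) a =
      #(H.filter fun e => (g e).isLeft) := by
    rw [sum_outdegD, filter_true_of_mem fun e he => (mem_product.1 (hH (filter_subset _ _ he))).1]
  have hsumK' : ∑ b ∈ B, indegD (H.filter fun e => ¬(g e).isLeft) b =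
      #(H.filter fun e => ¬(g e).isLeft) := by
    rw [sum_indegD, filter_true_of_mem fun e he => (mem_product.1 (hH (filter_subset _ _ he))).2]
  have hslack : ∑ b ∈ B, (indegD H b - t) + ∑ a ∈ A, t = #H := by
    rw [sum_const, smul_eq_mul, hAB, ← sum_const_nat fun _ _ => rfl, ← sum_add_distrib,
      sum_congr rfl fun b hb => Nat.sub_add_cancel (htin b hb), sum_indegD,
      filter_true_of_mem fun e he => (mem_product.1 (hH he)).2]
  -- every slot is taken, so both degree bounds are attained
  have hle1 := sum_le_sum fun a (_ : a ∈ A) => outdegD_filter_isLeft_le hg hgH a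
  have hle2 := sum_le_sum fun b (_ : b ∈ B) => indegD_filter_not_isLeft_le hg hgH b
  have htotal := card_filter_add_card_filter_not (s := H) fun e => (g e).isLeft
  have heq1 : ∑ a ∈ A, outdegD (H.filter fun e => (g e).isLeft) a = ∑ a ∈ A, t := by omega
  have heq2 : ∑ b ∈ B, indegD (H.filter fun e => ¬(g e).isLeft) b =
      ∑ b ∈ B, (indegD H b - t) := by omega
  refine ⟨(sum_eq_sum_iff_of_le fun a _ => outdegD_filter_isLeft_le hg hgH a).1 heq1,
    fun b hb => ?_⟩
  have h1 := (sum_eq_sum_iff_of_le fun b _ => indegD_filter_not_isLeft_le hg hgH b).1 heq2 b hb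
  have h2 : indegD (H.filter fun e => (g e).isLeft) b +
      indegD (H.filter fun e => ¬(g e).isLeft) b = indegD H b := by
    simp only [indegD, filter_filter]
    rw [← card_filter_add_card_filter_not (s := H.filter (·.2 = b)) fun e => (g e).isLeft,
      filter_filter, filter_filter]
    simp only [and_comm]
  have := htin b hb
  omega

end SlotAssignment

-- `hore` is Ore's condition `t (|S| + |T| - |A|) ≤ e(S, T)` for a `t`-factor, written without
-- truncated subtraction.
lemma hall_edgeSlots_of_ore (hH : H ⊆ A ×ˢ B) {t : ℕ}
    (hore : ∀ S ⊆ A, ∀ T ⊆ B, t * (#S + #T) ≤ t * #A + #(H ∩ S ×ˢ T))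
    (htin : ∀ b ∈ B, t ≤ indegD H b) :
    ∀ X ⊆ H, #X ≤ #(X.biUnion fun e => edgeSlots t (indegD H · - t) {e.1} {e.2}) := by
  intro X hX
  set S := X.image Prod.fst
  set T := X.image Prod.snd
  have hSA : S ⊆ A := image_subset_iff.2 fun e he => (mem_product.1 (hH (hX he))).1
  have hTB : T ⊆ B := image_subset_iff.2 fun e he => (mem_product.1 (hH (hX he))).2
  refine le_trans ?_ (card_le_card (edgeSlots_image_subset_biUnion _ _ X))
  calc #X ≤ #(H ∩ S ×ˢ T) := card_le_card fun e he =>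
        mem_inter.2 ⟨hX he, mem_product.2 ⟨mem_image_of_mem _ he, mem_image_of_mem _ he⟩⟩
    _ ≤ t * #S + ∑ b ∈ T, (indegD H b - t) := by
      have h1 := hore (A \ S) sdiff_subset T hTB
      have h2 := card_filter_snd_mem_eq_add hH S T
      have h3 : ∑ b ∈ T, (indegD H b - t) + t * #T = ∑ b ∈ T, indegD H b := by
        rw [mul_comm, ← smul_eq_mul, ← sum_const, ← sum_add_distrib]
        exact sum_congr rfl fun b hb => Nat.sub_add_cancel (htin b (hTB hb))
      have h4 : t * (#(A \ S) + #T) + t * #S = t * #A + t * #T := by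
        rw [← mul_add, ← mul_add, card_sdiff_of_subset hSA, add_right_comm,
          Nat.sub_add_cancel (card_le_card hSA)]
      rw [← sum_indegD] at h2
      omega
    _ = _ := (card_edgeSlots _ _ _ _).symm

lemma exists_regular_subgraph_of_ore (hH : H ⊆ A ×ˢ B) (hAB : #A = #B) (t : ℕ)
    (hore : ∀ S ⊆ A, ∀ T ⊆ B, t * (#S + #T) ≤ t * #A + #(H ∩ S ×ˢ T)) :
    ∃ K ⊆ H, (∀ a ∈ A, outdegD K a = t) ∧ ∀ b ∈ B, indegD K b = t := by
  rcases isEmpty_or_nonempty V with hV | hV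
  · exact ⟨∅, empty_subset _, fun a => isEmptyElim a, fun b => isEmptyElim b⟩
  have htin : ∀ b ∈ B, t ≤ indegD H b := fun b hb => by
    have h1 := hore A subset_rfl {b} (singleton_subset_iff.2 hb)
    have h2 : #(H ∩ A ×ˢ {b}) ≤ indegD H b := card_le_card fun e he =>
      mem_filter.2 ⟨(mem_inter.1 he).1, by simpa using (mem_product.1 (mem_inter.1 he).2).2⟩
    rw [card_singleton, mul_add, mul_one] at h1
    omega
  obtain ⟨g, hg, hgH⟩ := exists_injOn_of_hall H _ (hall_edgeSlots_of_ore hH hore htin)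
  exact ⟨_, filter_subset _ _, regular_filter_isLeft hH hAB htin hg hgH⟩

lemma ore_of_degree_bounds (hH : H ⊆ A ×ˢ B) {m : ℕ} (hA : #A = m) (hB : #B = m) {δ Δ : ℝ}
    {t : ℕ} (hout : ∀ a ∈ A, δ ≤ outdegD H a ∧ (outdegD H a : ℝ) ≤ Δ)
    (hin : ∀ b ∈ B, δ ≤ indegD H b ∧ (indegD H b : ℝ) ≤ Δ) (htδ : (t : ℝ) ≤ δ) (hδΔ : δ ≤ Δ)
    (hkey : m * (Δ - δ) ≤ (2 * δ - m) * (δ - t)) :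
    ∀ S ⊆ A, ∀ T ⊆ B, t * (#S + #T) ≤ t * #A + #(H ∩ S ×ˢ T) := by
  intro S hS T hT
  have hSc : (#(A \ S) : ℝ) = m - #S := by
    rw [card_sdiff_of_subset hS, Nat.cast_sub (card_le_card hS), hA]
  have hTc : (#(B \ T) : ℝ) = m - #T := by
    rw [card_sdiff_of_subset hT, Nat.cast_sub (card_le_card hT), hB]
  have hsumS : #S * δ ≤ ∑ a ∈ S, (outdegD H a : ℝ) := by
    simpa using card_nsmul_le_sum S _ δ fun a ha => (hout a (hS ha)).1
  have hsumT : #T * δ ≤ ∑ b ∈ T, (indegD H b : ℝ) := by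
    simpa using card_nsmul_le_sum T _ δ fun b hb => (hin b (hT hb)).1
  have hsumBT : ∑ b ∈ B \ T, (indegD H b : ℝ) ≤ #(B \ T) * Δ := by
    simpa using sum_le_card_nsmul (B \ T) _ Δ fun b hb => (hin b (mem_sdiff.1 hb).1).2
  have e1 := card_filter_fst_mem_eq_add hH S T
  have e2 := card_filter_snd_mem_eq_add hH S T
  rw [← sum_outdegD] at e1
  rw [← sum_indegD] at e2
  have c1 : #(H ∩ S ×ˢ (B \ T)) ≤ #S * #(B \ T) :=
    (card_le_card inter_subset_right).trans (card_product _ _).le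
  have c2 : #(H ∩ (A \ S) ×ˢ T) ≤ #(A \ S) * #T :=
    (card_le_card inter_subset_right).trans (card_product _ _).le
  have c3 : #(H ∩ S ×ˢ (B \ T)) ≤ ∑ b ∈ B \ T, indegD H b := sum_indegD H _ ▸
    card_le_card fun e he => mem_filter.2 ⟨(mem_inter.1 he).1, (mem_product.1 (mem_inter.1 he).2).2⟩
  rify at e1 e2 c1 c2 c3
  rw [hA]
  exact_mod_cast ore_ineq (m := m) (t := t) (e := #(H ∩ S ×ˢ T)) (Nat.cast_nonneg _)
    (by exact_mod_cast hA ▸ card_le_card hS) (Nat.cast_nonneg _)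
    (by exact_mod_cast hB ▸ card_le_card hT) (Nat.cast_nonneg _) (Nat.cast_nonneg _) htδ hδΔ
    (by rw [← hTc]; nlinarith) (by rw [← hSc]; nlinarith) (by rw [← hTc]; nlinarith) hkey

lemma exists_disjoint_perfectMatchingsD_of_degree_bounds {ι : Type*} [DecidableEq ι]
    (hH : H ⊆ A ×ˢ B) {m : ℕ} (hA : #A = m) (hB : #B = m) {δ Δ : ℝ}
    (hout : ∀ a ∈ A, δ ≤ outdegD H a ∧ (outdegD H a : ℝ) ≤ Δ)
    (hin : ∀ b ∈ B, δ ≤ indegD H b ∧ (indegD H b : ℝ) ≤ Δ) (J : Finset ι) (htδ : (#J : ℝ) ≤ δ)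
    (hδΔ : δ ≤ Δ) (hkey : m * (Δ - δ) ≤ (2 * δ - m) * (δ - #J)) :
    ∃ N : ι → Finset (V × V), (∀ j ∈ J, N j ⊆ H ∧ IsPerfectMatchingD (N j) A B) ∧
      (J : Set ι).PairwiseDisjoint N := by
  obtain ⟨K, hKH, hKout, hKin⟩ := exists_regular_subgraph_of_ore hH (hA.trans hB.symm) #J
    (ore_of_degree_bounds hH hA hB hout hin htδ hδΔ hkey)
  obtain ⟨N, hN, hNdisj⟩ := exists_disjoint_perfectMatchingsD_of_regular (hA.trans hB.symm) J K
    (hKH.trans hH) hKout hKin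
  exact ⟨N, fun j hj => ⟨(hN j hj).1.trans hKH, (hN j hj).2⟩, hNdisj⟩

lemma exists_disjoint_perfectMatchingsD {ι : Type*} [Fintype ι] [DecidableEq ι]
    (hH : H ⊆ A ×ˢ B) {m : ℕ} (hA : #A = m) (hB : #B = m) {μ ε β ρ : ℝ}
    (hout : ∀ a ∈ A, (1 - μ - ε) * m ≤ outdegD H a ∧ (outdegD H a : ℝ) ≤ (1 - μ + ε) * m)
    (hin : ∀ b ∈ B, (1 - μ - ε) * m ≤ indegD H b ∧ (indegD H b : ℝ) ≤ (1 - μ + ε) * m)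
    (As Bs : ι → Finset V) (hAs : ∀ s, As s ⊆ A) (hBs : ∀ s, Bs s ⊆ B)
    (hcard : ∀ s, #(As s) = #(Bs s))
    (hdefA : ∀ s, (#(A \ As s) : ℝ) ≤ ε * m) (hdefB : ∀ s, (#(B \ Bs s) : ℝ) ≤ ε * m)
    (busy : Finset ι) (hbusy : ∀ s ∉ busy, As s = A ∧ Bs s = B)
    (hbusy_card : (#busy : ℝ) ≤ β * m) (hq : (Fintype.card ι : ℝ) ≤ (1 - μ - ρ) * m)
    (hμ : μ ≤ 1 / 4) (hε : 0 ≤ ε) (hβ : 0 ≤ β) (hsmall : 2 * ε + β ≤ ρ / 5) (hρ : ρ ≤ 1 / 4) :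
    ∃ M : ι → Finset (V × V), (∀ s, M s ⊆ H ∧ IsPerfectMatchingD (M s) (As s) (Bs s)) ∧
      Pairwise fun s s' => Disjoint (M s) (M s') := by
  have hm : (0 : ℝ) ≤ m := Nat.cast_nonneg m
  obtain ⟨Mb, hMb, hMbdisj⟩ := exists_disjoint_perfectMatchingsD_of_minDegree (H := H) As Bs
    ((1 - μ - 2 * ε) * m) busy (fun s _ => hcard s)
    (fun s _ => by
      have : (#(As s) : ℝ) ≤ m := by exact_mod_cast hA ▸ card_le_card (hAs s)
      nlinarith)
    (fun s _ a ha => by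
      have h := outdegD_le_outdegD_inter_add (Y := Bs s) hH ha
      rify at h
      linarith [(hout a (hAs s ha)).1, hdefB s])
    (fun s _ b hb => by
      have h := indegD_le_indegD_inter_add (X := As s) hH hb
      rify at h
      linarith [(hin b (hBs s hb)).1, hdefA s])
  have hMb' : ∀ s ∈ busy, IsPerfectMatchingD (Mb s) (As s) (Bs s) := fun s hs => (hMb s hs).2
  have hJ : (#busyᶜ : ℝ) ≤ (1 - μ - ρ) * m := le_trans (by exact_mod_cast card_le_univ _) hq
  obtain ⟨N, hN, hNdisj⟩ := exists_disjoint_perfectMatchingsD_of_degree_bounds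
    (sdiff_subset.trans hH) hA hB (δ := (1 - μ - ε - β) * m) (Δ := (1 - μ + ε) * m)
    (fun a ha => by
      have h1 := outdegD_le_outdegD_sdiff_biUnion_add H hMb' a
      have h2 := outdegD_mono (G := H \ busy.biUnion Mb) sdiff_subset a
      rify at h1 h2
      exact ⟨by linarith [(hout a ha).1], h2.trans (hout a ha).2⟩)
    (fun b hb => by
      have h1 := indegD_le_indegD_sdiff_biUnion_add H hMb' b
      have h2 := indegD_mono (G := H \ busy.biUnion Mb) sdiff_subset b
      rify at h1 h2
      exact ⟨by linarith [(hin b hb).1], h2.trans (hin b hb).2⟩)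
    busyᶜ (by nlinarith) (by nlinarith) (ore_key_of_near_regular hm hJ hμ hε hβ hsmall hρ)
  refine ⟨busy.piecewise Mb N, fun s => ?_, pairwise_disjoint_piecewise hMbdisj hNdisj
    fun s hs => disjoint_of_subset_left (hN s (mem_compl.2 hs)).1 sdiff_disjoint⟩
  by_cases hs : s ∈ busy
  · rw [piecewise_eq_of_mem _ _ _ hs]
    exact hMb s hs
  · rw [piecewise_eq_of_notMem _ _ _ hs, (hbusy s hs).1, (hbusy s hs).2]
    exact ⟨(hN s (mem_compl.2 hs)).1.trans sdiff_subset, (hN s (mem_compl.2 hs)).2⟩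

end Factors

section CyclicSystems

variable {V : Type*} [DecidableEq V]

lemma outdegD_inter_product (G : Finset (V × V)) {A : Finset V} (B : Finset V) {u : V}
    (hu : u ∈ A) : outdegD (G ∩ A ×ˢ B) u = #(G.filter fun e => e.1 = u ∧ e.2 ∈ B) := by
  unfold outdegD
  congr 1
  ext e
  simp only [mem_filter, mem_inter, mem_product]
  constructor
  · rintro ⟨⟨heG, -, heB⟩, rfl⟩
    exact ⟨heG, rfl, heB⟩
  · rintro ⟨heG, rfl, heB⟩
    exact ⟨⟨heG, hu, heB⟩, rfl⟩

lemma indegD_inter_product (G : Finset (V × V)) (A : Finset V) {B : Finset V} {w : V}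
    (hw : w ∈ B) : indegD (G ∩ A ×ˢ B) w = #(G.filter fun e => e.2 = w ∧ e.1 ∈ A) := by
  unfold indegD
  congr 1
  ext e
  simp only [mem_filter, mem_inter, mem_product]
  constructor
  · rintro ⟨⟨heG, heA, -⟩, rfl⟩
    exact ⟨heG, rfl, heA⟩
  · rintro ⟨heG, rfl, heA⟩
    exact ⟨⟨heG, heA, hw⟩, rfl⟩

lemma exists_perfectMatchingsD_between_clusters {σ : Type*} [Fintype σ] [DecidableEq σ]
    {G : Finset (V × V)} {A B : Finset V} {m : ℕ} (hA : #A = m) (hB : #B = m) {μ ε β ρ : ℝ}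
    (hout : ∀ u ∈ A, (1 - μ - ε) * m ≤ (#(G.filter fun e => e.1 = u ∧ e.2 ∈ B) : ℝ) ∧
      (#(G.filter fun e => e.1 = u ∧ e.2 ∈ B) : ℝ) ≤ (1 - μ + ε) * m)
    (hin : ∀ w ∈ B, (1 - μ - ε) * m ≤ (#(G.filter fun e => e.2 = w ∧ e.1 ∈ A) : ℝ) ∧
      (#(G.filter fun e => e.2 = w ∧ e.1 ∈ A) : ℝ) ≤ (1 - μ + ε) * m)
    (PS : σ → Finset (V × V)) (hPS : ∀ s v, outdegD (PS s) v ≤ 1 ∧ indegD (PS s) v ≤ 1)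
    (hbal : ∀ s, #((PS s).filter (·.1 ∈ A)) = #((PS s).filter (·.2 ∈ B)))
    (hsuppA : ∀ s, (#(suppD (PS s) ∩ A) : ℝ) ≤ ε * m)
    (hsuppB : ∀ s, (#(suppD (PS s) ∩ B) : ℝ) ≤ ε * m)
    (hmeetA : (#(univ.filter fun s => (suppD (PS s) ∩ A).Nonempty) : ℝ) ≤ β * m)
    (hmeetB : (#(univ.filter fun s => (suppD (PS s) ∩ B).Nonempty) : ℝ) ≤ β * m)
    (hq : (Fintype.card σ : ℝ) ≤ (1 - μ - ρ) * m) (hμ : μ ≤ 1 / 4) (hε : 0 ≤ ε) (hβ : 0 ≤ β)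
    (hsmall : 2 * ε + 2 * β ≤ ρ / 5) (hρ : ρ ≤ 1 / 4) :
    ∃ M : σ → Finset (V × V), (∀ s, M s ⊆ G ∩ A ×ˢ B ∧ IsPerfectMatchingD (M s)
      (A.filter (outdegD (PS s) · = 0)) (B.filter (indegD (PS s) · = 0))) ∧
      ∀ s t, s ≠ t → Disjoint (M s) (M t) := by
  have hbusy := card_union_le (univ.filter fun s => (suppD (PS s) ∩ A).Nonempty)
    (univ.filter fun s => (suppD (PS s) ∩ B).Nonempty)
  rify at hbusy
  obtain ⟨M, hM, hMdisj⟩ := exists_disjoint_perfectMatchingsD (inter_subset_right (s₁ := G))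
    hA hB (β := 2 * β) (ρ := ρ)
    (fun u hu => by rw [outdegD_inter_product G B hu]; exact hout u hu)
    (fun w hw => by rw [indegD_inter_product G A hw]; exact hin w hw)
    (fun s => A.filter (outdegD (PS s) · = 0)) (fun s => B.filter (indegD (PS s) · = 0))
    (fun _ => filter_subset _ _) (fun _ => filter_subset _ _)
    (fun s => card_filter_outdegD_eq_zero_eq (hPS s) (hA.trans hB.symm) (hbal s))
    (fun s => (Nat.cast_le.2 (card_le_card (sdiff_filter_outdegD_eq_zero_subset _ A))).trans
      (hsuppA s))
    (fun s => (Nat.cast_le.2 (card_le_card (sdiff_filter_indegD_eq_zero_subset _ B))).trans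
      (hsuppB s))
    ((univ.filter fun s => (suppD (PS s) ∩ A).Nonempty) ∪
      univ.filter fun s => (suppD (PS s) ∩ B).Nonempty) (fun s hs => by
      simp only [mem_union, mem_filter, mem_univ, true_and, not_or,
        not_nonempty_iff_eq_empty] at hs
      exact ⟨filter_outdegD_eq_zero_eq_self hs.1, filter_indegD_eq_zero_eq_self hs.2⟩)
    (by linarith) hq hμ hε (by positivity) (by linarith) hρ
  exact ⟨M, hM, fun s t hst => hMdisj hst⟩

lemma exists_oneFactors_of_clusterMatchings {ι σ : Type*} [Fintype ι] [DecidableEq ι]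
    [AddGroupWithOne ι] {G : Finset (V × V)} {Vc : ι → Finset V}
    (hdisj : ∀ i j, i ≠ j → Disjoint (Vc i) (Vc j)) (hcover : ∀ v, ∃ i, v ∈ Vc i)
    (PS : σ → Finset (V × V)) (hPS : ∀ s v, outdegD (PS s) v ≤ 1 ∧ indegD (PS s) v ≤ 1)
    (M : ι → σ → Finset (V × V))
    (hM : ∀ i s, M i s ⊆ G ∩ Vc i ×ˢ Vc (i + 1) ∧ IsPerfectMatchingD (M i s)
      ((Vc i).filter (outdegD (PS s) · = 0)) ((Vc (i + 1)).filter (indegD (PS s) · = 0)))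
    (hMdisj : ∀ i s t, s ≠ t → Disjoint (M i s) (M i t)) :
    ∃ F : σ → Finset (V × V),
      (∀ s, (∀ v : V, outdegD (F s) v = 1 ∧ indegD (F s) v = 1) ∧
        PS s ⊆ F s ∧ F s \ PS s ⊆ G) ∧
      (∀ s t, s ≠ t → Disjoint (F s \ PS s) (F t \ PS t)) := by
  have hsub : ∀ s, (PS s ∪ univ.biUnion (M · s)) \ PS s ⊆ univ.biUnion (M · s) := fun s e he =>
    (mem_union.1 (mem_sdiff.1 he).1).resolve_left (mem_sdiff.1 he).2
  refine ⟨fun s => PS s ∪ univ.biUnion (M · s), fun s => ⟨?_, subset_union_left, ?_⟩,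
    fun s t hst => ?_⟩
  · refine IsPerfectMatchingD.oneFactor_union
      (IsPerfectMatchingD.biUnion (fun i _ j _ hij => ?_) (fun i _ j _ hij => ?_)
        fun i _ => (hM i s).2) (hPS s) (fun v => ?_) (fun v => ?_)
    · exact disjoint_filter_filter (hdisj i j hij)
    · exact disjoint_filter_filter (hdisj _ _ fun h => hij (add_right_cancel h))
    · obtain ⟨i, hi⟩ := hcover v
      simp only [mem_biUnion, mem_univ, true_and, mem_filter]
      exact ⟨fun ⟨_, _, h⟩ => h, fun h => ⟨i, hi, h⟩⟩
    · obtain ⟨i, hi⟩ := hcover v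
      simp only [mem_biUnion, mem_univ, true_and, mem_filter]
      exact ⟨fun ⟨_, _, h⟩ => h, fun h => ⟨i - 1, by rwa [sub_add_cancel], h⟩⟩
  · exact (hsub s).trans (biUnion_subset.2 fun i _ => (hM i s).1.trans inter_subset_left)
  · refine disjoint_of_subset_left (hsub s) (disjoint_of_subset_right (hsub t)
      (disjoint_left.2 fun e hes het => ?_))
    obtain ⟨i, -, hei⟩ := mem_biUnion.1 hes
    obtain ⟨j, -, hej⟩ := mem_biUnion.1 het
    have hi := (mem_product.1 (mem_inter.1 ((hM i s).1 hei)).2).1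
    have hj := (mem_product.1 (mem_inter.1 ((hM j t).1 hej)).2).1
    obtain rfl : i = j := by_contra fun hij => disjoint_left.1 (hdisj i j hij) hi hj
    exact disjoint_left.1 (hMdisj i s t hst) hei hej

end CyclicSystems

/-- Lemma 6.3: extending locally balanced path sequences into directed 1-factors inside a
cyclic system. -/
theorem stmt9 :
    ∃ ρ₀ : ℝ, 0 < ρ₀ ∧ ∀ ρ : ℝ, 0 < ρ → ρ ≤ ρ₀ →
    ∀ ℓ : ℕ, 1 ≤ ℓ →
    ∃ ε₀ : ℝ, 0 < ε₀ ∧ ∀ ε : ℝ, 0 < ε → ε ≤ ε₀ →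
    ∀ k : ℕ, 0 < k → (1 : ℝ) / k ≤ ε →
    ∃ m₀ : ℕ, ∀ m : ℕ, m₀ ≤ m →
    ∀ μ : ℝ, 0 ≤ μ → μ ≤ 1/4 →
    ∀ q : ℕ, (q : ℝ) ≤ (1 - μ - ρ) * m →
    ∀ (V : Type) [inst : DecidableEq V], ∀ (G : Finset (V × V)) (Vc : ZMod k → Finset V),
      -- (G, Q, C) is a (k, m, μ, ε)-cyclic system, with C = V₁ … V_k
      (∀ i j, i ≠ j → Disjoint (Vc i) (Vc j)) →
      (∀ i, (Vc i).card = m) →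
      (∀ v : V, ∃ i, v ∈ Vc i) →
      (∀ e ∈ G, ∃ i, e.1 ∈ Vc i ∧ e.2 ∈ Vc (i + 1)) →
      (∀ i, ∀ u ∈ Vc i,
        (1 - μ - ε) * m ≤ ((G.filter fun e => e.1 = u ∧ e.2 ∈ Vc (i + 1)).card : ℝ) ∧
        ((G.filter fun e => e.1 = u ∧ e.2 ∈ Vc (i + 1)).card : ℝ) ≤ (1 - μ + ε) * m) →
      (∀ i, ∀ w ∈ Vc (i + 1),
        (1 - μ - ε) * m ≤ ((G.filter fun e => e.2 = w ∧ e.1 ∈ Vc i).card : ℝ) ∧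
        ((G.filter fun e => e.2 = w ∧ e.1 ∈ Vc i).card : ℝ) ≤ (1 - μ + ε) * m) →
      -- the path sequences
      ∀ PS : Fin q → Finset (V × V),
      (∀ s, IsPathSeq (PS s)) →
      -- (i): each PS_s is locally balanced with respect to C
      (∀ s i, ((PS s).filter fun e => e.1 ∈ Vc i).card
        = ((PS s).filter fun e => e.2 ∈ Vc (i + 1)).card) →
      -- (ii)
      (∀ s i, ((suppD (PS s) ∩ Vc i).card : ℝ) ≤ ε * m) →
      (∀ i, (((Finset.univ : Finset (Fin q)).filter
          fun s => (suppD (PS s) ∩ Vc i).Nonempty).card : ℝ) ≤ ℓ * m / k) →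
      -- conclusion: directed 1-factors
      ∃ F : Fin q → Finset (V × V),
        (∀ s, (∀ v : V, outdegD (F s) v = 1 ∧ indegD (F s) v = 1) ∧
          PS s ⊆ F s ∧ F s \ PS s ⊆ G) ∧
        (∀ s t, s ≠ t → Disjoint (F s \ PS s) (F t \ PS t)) := by
  refine ⟨1 / 4, by norm_num, fun ρ _ hρ ℓ _ => ⟨ρ / (10 * (ℓ + 1)), by positivity,
    fun ε hε hε₀ k hk hkε => ⟨0, fun m _ μ _ hμ q hq V _ G Vc hdisj hcard hcover _ hout hin
      PS hPS hbal hsupp hmeet => ?_⟩⟩⟩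
  have : NeZero k := ⟨hk.ne'⟩
  have hmeet' : (ℓ * m / k : ℝ) ≤ ℓ * ε * m := by
    calc (ℓ * m / k : ℝ) = ℓ * m * (1 / k) := by ring
      _ ≤ ℓ * m * ε := mul_le_mul_of_nonneg_left hkε (by positivity)
      _ = ℓ * ε * m := by ring
  have hsmall : 2 * ε + 2 * (ℓ * ε) ≤ ρ / 5 := by
    have := (le_div_iff₀ (by positivity)).1 hε₀
    linarith
  choose M hM hMdisj using fun i => exists_perfectMatchingsD_between_clusters (hcard i)
    (hcard (i + 1)) (hout i) (hin i) PS (fun s => (hPS s).1) (fun s => hbal s i)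
    (fun s => hsupp s i) (fun s => hsupp s (i + 1)) ((hmeet i).trans hmeet')
    ((hmeet (i + 1)).trans hmeet') (by rwa [Fintype.card_fin]) hμ hε.le (by positivity)
    hsmall (by linarith)
  exact exists_oneFactors_of_clusterMatchings hdisj hcover PS (fun s => (hPS s).1) M hM hMdisj
end
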